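/- arXiv:0906.4187 — 6 statements merged into one kernel-verified Lean document; each statement's English description precedes it below -/
import Mathlib

section
/- Let ρ be a density matrix on a bipartite Hilbert space H_A ⊗ H_B that admits a product eigenbasis, i.e., ρ = Σ_{j,k} e_{jk} |a_j⟩⟨a_j| ⊗ |b_k⟩⟨b_k| for orthonormal bases {|a_j⟩} of H_A and {|b_k⟩} of H_B. Let η be an eigenvalue of ρ, let P_η be the orthogonal projection onto the η-eigenspace, and let ρ̃^η = η P_η be the truncation of ρ to that eigenspace. Then every eigenvalue of the partial trace Tr_B ρ̃^η is an integer multiple of η (and likewise for Tr_A ρ̃^η). -/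
open Matrix Kronecker Finset
open scoped ComplexOrder

attribute [local instance] Classical.propDecidable

noncomputable section

/-- nearest integer multiple of `y` to `x`, ties broken downward; `0` if `y = 0`. -/
def nim (y x : ℝ) : ℝ :=
  if y = 0 then 0
  else if x - y * ⌊x / y⌋ ≤ y * ⌈x / y⌉ - x then y * ⌊x / y⌋ else y * ⌈x / y⌉

/-- partial trace over the second (B) factor -/
def ptraceB {α β : Type*} [Fintype α] [Fintype β]
    (ρ : Matrix (α × β) (α × β) ℂ) : Matrix α α ℂ :=
  fun a a' => ∑ b : β, ρ (a, b) (a', b)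

/-- partial trace over the first (A) factor -/
def ptraceA {α β : Type*} [Fintype α] [Fintype β]
    (ρ : Matrix (α × β) (α × β) ℂ) : Matrix β β ℂ :=
  fun b b' => ∑ a : α, ρ (a, b) (a, b')

/-- the (real) eigenvalues of a Hermitian matrix, junk value `0` otherwise -/
def evalsR {n : Type*} [Fintype n] [DecidableEq n] (A : Matrix n n ℂ) : n → ℝ :=
  if h : A.IsHermitian then h.eigenvalues else 0

/-- orthogonal projection onto the η-eigenspace of a Hermitian matrix -/
def eigProj {n : Type*} [Fintype n] [DecidableEq n] (ρ : Matrix n n ℂ) (η : ℝ) :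
    Matrix n n ℂ :=
  if h : ρ.IsHermitian then
    ∑ k ∈ univ.filter (fun k => h.eigenvalues k = η),
      vecMulVec (fun i => h.eigenvectorBasis k i) (star fun i => h.eigenvectorBasis k i)
  else 0

/-- truncation of ρ down to the η-eigenspace: `η • P_η` -/
def trunc {n : Type*} [Fintype n] [DecidableEq n] (ρ : Matrix n n ℂ) (η : ℝ) :
    Matrix n n ℂ := (η : ℂ) • eigProj ρ η

/-- dimension of the η-eigenspace -/
def dimEig {n : Type*} [Fintype n] [DecidableEq n] (ρ : Matrix n n ℂ) (η : ℝ) : ℕ :=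
  if h : ρ.IsHermitian then (univ.filter (fun k => h.eigenvalues k = η)).card else 0

/-- a single term of the measure `M` -/
def Mterm (η T lam : ℝ) : ℝ := -(|lam - nim η lam| * Real.logb 2 (lam / T))

/-- the measure `M` seen from side A -/
def MmeasA {α β : Type*} [Fintype α] [Fintype β] [DecidableEq α] [DecidableEq β]
    (ρ : Matrix (α × β) (α × β) ℂ) : ℝ :=
  ∑ η ∈ Finset.image (evalsR ρ) univ, ∑ i : α,
    Mterm η (η * (dimEig ρ η : ℝ)) (evalsR (ptraceB (trunc ρ η)) i)

/-- the measure `M` seen from side B -/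
def MmeasB {α β : Type*} [Fintype α] [Fintype β] [DecidableEq α] [DecidableEq β]
    (ρ : Matrix (α × β) (α × β) ℂ) : ℝ :=
  ∑ η ∈ Finset.image (evalsR ρ) univ, ∑ i : β,
    Mterm η (η * (dimEig ρ η : ℝ)) (evalsR (ptraceA (trunc ρ η)) i)

/-- the measure `M` of nonclassical correlation -/
def Mmeas {α β : Type*} [Fintype α] [Fintype β] [DecidableEq α] [DecidableEq β]
    (ρ : Matrix (α × β) (α × β) ℂ) : ℝ := (MmeasA ρ + MmeasB ρ) / 2

def IsDensityMatrix {n : Type*} [Fintype n] [DecidableEq n] (ρ : Matrix n n ℂ) : Prop :=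
  ρ.PosSemidef ∧ ρ.trace = 1

/-- ρ admits an eigenbasis consisting of product vectors -/
def HasProductEigenbasis {α β : Type*} [Fintype α] [Fintype β] [DecidableEq α] [DecidableEq β]
    (ρ : Matrix (α × β) (α × β) ℂ) : Prop :=
  ∃ (a : α → α → ℂ) (b : β → β → ℂ) (e : α → β → ℝ),
    (∀ j j', ∑ i, star (a j i) * a j' i = if j = j' then 1 else 0) ∧
    (∀ k k', ∑ i, star (b k i) * b k' i = if k = k' then 1 else 0) ∧
    ρ = ∑ j : α, ∑ k : β,
      (e j k : ℂ) • (vecMulVec (a j) (star (a j)) ⊗ₖ vecMulVec (b k) (star (b k)))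

/-! The product basis diagonalises `ρ` as `(A ⊗ₖ B) * diagonal e * star (A ⊗ₖ B)` with `A`, `B`
unitary. If `W * diagonal d = diagonal d' * W`, then also
`W * diagonal (f ∘ d) = diagonal (f ∘ d') * W`, since a nonzero entry `W i j` forces `d j = d' i`;
hence the eigenprojection does not depend on the chosen eigenbasis, and
`trunc ρ η = (A ⊗ₖ B) * diagonal (η • 1[e = η]) * star (A ⊗ₖ B)`.
Tracing out `B` leaves `A * diagonal (fun j => η * #{k | e (j, k) = η}) * star A`, whose spectrum
consists of these multiples of `η`. -/

namespace Matrix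

section FunctionalCalculus

variable {m n R : Type*} [Fintype m] [Fintype n] [DecidableEq m] [DecidableEq n]
  [CommRing R] [NoZeroDivisors R]

theorem mul_diagonal_comp_eq_of_mul_diagonal_eq {W : Matrix m n R} {d : n → R}
    {d' : m → R} (h : W * diagonal d = diagonal d' * W) (f : R → R) :
    W * diagonal (f ∘ d) = diagonal (f ∘ d') * W := by
  ext i j
  have hij : W i j * d j = d' i * W i j := by simpa using congrFun (congrFun h i) j
  rcases eq_or_ne (W i j) 0 with hW | hW
  · simp [hW]
  · have : d j = d' i := mul_left_cancel₀ hW (by rw [hij, mul_comm])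
    simp [this, mul_comm]

variable [StarRing R]

theorem conj_diagonal_comp_eq_of_conj_diagonal_eq {U V : Matrix n n R}
    (hU : U ∈ unitary (Matrix n n R)) (hV : V ∈ unitary (Matrix n n R)) {d d' : n → R}
    (h : U * diagonal d * star U = V * diagonal d' * star V) (f : R → R) :
    U * diagonal (f ∘ d) * star U = V * diagonal (f ∘ d') * star V := by
  set W := star V * U
  have hW : W * diagonal d = diagonal d' * W := by
    calc W * diagonal d = star V * (U * diagonal d * star U) * U := by
          simp [W, Matrix.mul_assoc, hU.1]
      _ = diagonal d' * W := by
          rw [h]; simp [W, ← Matrix.mul_assoc, hV.1]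
  calc U * diagonal (f ∘ d) * star U = V * (W * diagonal (f ∘ d)) * star U := by
        simp [W, ← Matrix.mul_assoc, hV.2]
    _ = V * diagonal (f ∘ d') * star V := by
      rw [mul_diagonal_comp_eq_of_mul_diagonal_eq hW]
      simp [W, Matrix.mul_assoc, hU.2]

end FunctionalCalculus

theorem sum_smul_vecMulVec_eq_mul_diagonal_mul {m n R : Type*} [Fintype n] [DecidableEq n]
    [CommSemiring R] [StarRing R] (A : Matrix m n R) (t : n → R) :
    ∑ j, t j • vecMulVec (fun i => A i j) (star fun i => A i j) = A * diagonal t * Aᴴ := by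
  ext i i'
  simp only [sum_apply, smul_apply, vecMulVec_apply, mul_apply, diagonal_apply,
    conjTranspose_apply, Pi.star_apply, mul_ite, mul_zero, Finset.sum_ite_eq', Finset.mem_univ,
    if_true, smul_eq_mul]
  exact Finset.sum_congr rfl fun _ _ => by ring

theorem transpose_of_mem_unitary_of_orthonormal {n R : Type*} [Fintype n] [DecidableEq n]
    [CommRing R] [StarRing R] {a : n → n → R}
    (ha : ∀ j j', ∑ i, star (a j i) * a j' i = if j = j' then 1 else 0) :
    (of a)ᵀ ∈ unitary (Matrix n n R) := by
  rw [← unitaryGroup, mem_unitaryGroup_iff']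
  ext j j'
  simpa [mul_apply, one_apply] using ha j j'

theorem spectrum_conj_diagonal {n K : Type*} [Fintype n] [DecidableEq n] [Field K]
    [StarRing K] {U : Matrix n n K} (hU : U ∈ unitary (Matrix n n K)) (t : n → K) :
    spectrum K (U * diagonal t * star U) = Set.range t := by
  rw [show U = ((⟨U, hU⟩ : unitary (Matrix n n K)) : Matrix n n K) from rfl,
    Unitary.spectrum_star_right_conjugate, spectrum_diagonal]

end Matrix

section Truncation

variable {n : Type*} [Fintype n] [DecidableEq n]

theorem trunc_eq_eigenvectorUnitary_conj {ρ : Matrix n n ℂ} (hρ : ρ.IsHermitian) (η : ℝ) :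
    trunc ρ η = (hρ.eigenvectorUnitary : Matrix n n ℂ) *
      diagonal (fun k => if hρ.eigenvalues k = η then (η : ℂ) else 0) *
      star (hρ.eigenvectorUnitary : Matrix n n ℂ) := by
  rw [trunc, eigProj, dif_pos hρ, Finset.sum_filter, star_eq_conjTranspose,
    ← sum_smul_vecMulVec_eq_mul_diagonal_mul, Finset.smul_sum]
  refine Finset.sum_congr rfl fun k _ => ?_
  split_ifs <;> simp

theorem trunc_eq_of_eq_conj_diagonal {ρ V : Matrix n n ℂ} (hV : V ∈ unitary (Matrix n n ℂ))
    {e : n → ℝ} (hρ : ρ = V * diagonal (fun p => (e p : ℂ)) * star V) (η : ℝ) :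
    trunc ρ η = V * diagonal (fun p => if e p = η then (η : ℂ) else 0) * star V := by
  have hherm : ρ.IsHermitian := by
    rw [hρ, star_eq_conjTranspose]
    exact isHermitian_mul_mul_conjTranspose _
      (isHermitian_diagonal_of_self_adjoint _ (by ext p; simp))
  have hspec : (hherm.eigenvectorUnitary : Matrix n n ℂ) *
      diagonal (fun k => (hherm.eigenvalues k : ℂ)) *
      star (hherm.eigenvectorUnitary : Matrix n n ℂ) =
      V * diagonal (fun p => (e p : ℂ)) * star V := by
    rw [← hρ]
    exact hherm.spectral_theorem.symm
  have hcalc := conj_diagonal_comp_eq_of_conj_diagonal_eq (SetLike.coe_mem _) hV hspec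
    (fun z => if z = η then (η : ℂ) else 0)
  simp only [Function.comp_def, Complex.ofReal_inj] at hcalc
  rw [trunc_eq_eigenvectorUnitary_conj hherm, hcalc]

end Truncation

section PartialTrace

variable {α β : Type*} [Fintype α] [Fintype β] [DecidableEq α] [DecidableEq β]

theorem ptraceB_kronecker_conj_diagonal (A : Matrix α α ℂ) {B : Matrix β β ℂ}
    (hB : star B * B = 1) (g : α × β → ℂ) :
    ptraceB ((A ⊗ₖ B) * diagonal g * star (A ⊗ₖ B)) =
      A * diagonal (fun j => ∑ k, g (j, k)) * star A := by
  have hBcol : ∀ k, ∑ i, B i k * star (B i k) = 1 := fun k => by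
    simpa [mul_apply, mul_comm] using congrFun (congrFun hB k) k
  ext i i'
  simp only [ptraceB, mul_apply, diagonal_apply, star_apply, kroneckerMap_apply, mul_ite,
    mul_zero, Finset.sum_ite_eq', Finset.mem_univ, if_true, Fintype.sum_prod_type,
    Finset.sum_mul, Finset.mul_sum, star_mul']
  rw [Finset.sum_comm, Finset.sum_congr rfl fun j _ => Finset.sum_comm]
  refine Finset.sum_congr rfl fun j _ => Finset.sum_congr rfl fun k _ => ?_
  rw [← mul_one (A i j * g (j, k) * star (A i' j)), ← hBcol k, Finset.mul_sum]
  exact Finset.sum_congr rfl fun _ _ => by ring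

theorem ptraceA_kronecker_conj_diagonal {A : Matrix α α ℂ} (hA : star A * A = 1)
    (B : Matrix β β ℂ) (g : α × β → ℂ) :
    ptraceA ((A ⊗ₖ B) * diagonal g * star (A ⊗ₖ B)) =
      B * diagonal (fun k => ∑ j, g (j, k)) * star B := by
  have hAcol : ∀ j, ∑ i, A i j * star (A i j) = 1 := fun j => by
    simpa [mul_apply, mul_comm] using congrFun (congrFun hA j) j
  ext i i'
  simp only [ptraceA, mul_apply, diagonal_apply, star_apply, kroneckerMap_apply, mul_ite,
    mul_zero, Finset.sum_ite_eq', Finset.mem_univ, if_true, Fintype.sum_prod_type,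
    Finset.sum_mul, Finset.mul_sum, star_mul']
  rw [Finset.sum_comm, Finset.sum_congr rfl fun j _ => Finset.sum_comm, Finset.sum_comm]
  refine Finset.sum_congr rfl fun k _ => Finset.sum_congr rfl fun j _ => ?_
  rw [← mul_one (B i k * g (j, k) * star (B i' k)), ← hAcol j, Finset.mul_sum]
  exact Finset.sum_congr rfl fun _ _ => by ring

theorem HasProductEigenbasis.exists_eq_kronecker_conj_diagonal
    {ρ : Matrix (α × β) (α × β) ℂ} (h : HasProductEigenbasis ρ) :
    ∃ (A : Matrix α α ℂ) (B : Matrix β β ℂ) (e : α × β → ℝ),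
      A ∈ unitary (Matrix α α ℂ) ∧ B ∈ unitary (Matrix β β ℂ) ∧
      ρ = (A ⊗ₖ B) * diagonal (fun p => (e p : ℂ)) * star (A ⊗ₖ B) := by
  obtain ⟨a, b, e, ha, hb, rfl⟩ := h
  refine ⟨(of a)ᵀ, (of b)ᵀ, fun p => e p.1 p.2, transpose_of_mem_unitary_of_orthonormal ha,
    transpose_of_mem_unitary_of_orthonormal hb, ?_⟩
  rw [star_eq_conjTranspose, ← sum_smul_vecMulVec_eq_mul_diagonal_mul, Fintype.sum_prod_type]
  refine Finset.sum_congr rfl fun j _ => Finset.sum_congr rfl fun k _ => ?_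
  congr 1
  ext ⟨i, i₂⟩ ⟨i', i₂'⟩
  simp [vecMulVec_apply, mul_mul_mul_comm]

end PartialTrace

theorem eigenvalues_of_partial_trace_of_truncation_are_integer_multiples_general
    {α β : Type*} [Fintype α] [Fintype β] [DecidableEq α] [DecidableEq β]
    (ρ : Matrix (α × β) (α × β) ℂ)
    (hpe : HasProductEigenbasis ρ) (η : ℝ) :
    (∀ μ ∈ spectrum ℂ (ptraceB (trunc ρ η)), ∃ k : ℕ, μ = (k : ℂ) * (η : ℂ)) ∧
    (∀ μ ∈ spectrum ℂ (ptraceA (trunc ρ η)), ∃ k : ℕ, μ = (k : ℂ) * (η : ℂ)) := by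
  obtain ⟨A, B, e, hA, hB, hρ⟩ := hpe.exists_eq_kronecker_conj_diagonal
  rw [trunc_eq_of_eq_conj_diagonal (kronecker_mem_unitary hA hB) hρ η,
    ptraceB_kronecker_conj_diagonal A hB.1, ptraceA_kronecker_conj_diagonal hA.1,
    spectrum_conj_diagonal hA, spectrum_conj_diagonal hB]
  constructor
  · rintro _ ⟨j, rfl⟩
    exact ⟨#{k | e (j, k) = η}, by simp [Finset.sum_ite]⟩
  · rintro _ ⟨k, rfl⟩
    exact ⟨#{j | e (j, k) = η}, by simp [Finset.sum_ite]⟩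

/-- if a bipartite density matrix has a product eigenbasis, then every
eigenvalue of the partial trace of the truncation `η • P_η` is an integer multiple of `η`
(both for `Tr_B` and `Tr_A`). -/
theorem eigenvalues_of_partial_trace_of_truncation_are_integer_multiples
    {α β : Type*} [Fintype α] [Fintype β] [DecidableEq α] [DecidableEq β]
    (ρ : Matrix (α × β) (α × β) ℂ) (hρ : IsDensityMatrix ρ)
    (hpe : HasProductEigenbasis ρ) (η : ℝ) (hη : ∃ k, evalsR ρ k = η) :
    (∀ μ ∈ spectrum ℂ (ptraceB (trunc ρ η)), ∃ k : ℕ, μ = (k : ℂ) * (η : ℂ)) ∧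
    (∀ μ ∈ spectrum ℂ (ptraceA (trunc ρ η)), ∃ k : ℕ, μ = (k : ℂ) * (η : ℂ)) :=
  eigenvalues_of_partial_trace_of_truncation_are_integer_multiples_general ρ hpe η
end
end

section
/- Let X = {{x_i^j}_{i=1}^{d_j}}_{j=1}^m and Y = {{y_i^j}_{i=1}^{d_j}}_{j=1}^m be collections of nonnegative reals with Σ_{j,i} x_i^j = Σ_{j,i} y_i^j = 1. Define T_j = Σ_{i=1}^{d_j} x_i^j, s(x,y) = −|x − y| log₂(x/T_j) (interpreted as 0 when x = 0), and S̃(X,Y) = Σ_{j,i} s(x_i^j, y_i^j). If y_i^j ≤ 2 x_i^j for all i, j, then S̃(X,Y) ≤ log₂(max_j d_j). -/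
open Matrix Kronecker Finset
open scoped ComplexOrder

attribute [local instance] Classical.propDecidable

noncomputable section

/-- the discrepancy term `s(x, y) = -|x - y| log₂ (x / T)`, interpreted as `0` when `x = 0` -/
def sFun (T x y : ℝ) : ℝ := if x = 0 then 0 else -(|x - y| * Real.logb 2 (x / T))

/-! Since `y ≤ 2x` forces `|x - y| ≤ x` and `log₂ (x / T_j) ≤ 0`, the `j`-th group
contributes at most `T_j` times the Shannon entropy of `(x_i^j / T_j)_i`, which is at most
`log₂ d_j ≤ log₂ max_j d_j`; the weights `T_j` sum to `1`. -/

namespace Real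

theorem mul_log_div_le_sub {x c : ℝ} (hx : 0 ≤ x) (hc : 0 < c) : x * log (c / x) ≤ c - x := by
  rcases hx.eq_or_lt with rfl | hx
  · simpa using hc.le
  calc x * log (c / x) ≤ x * (c / x - 1) :=
        mul_le_mul_of_nonneg_left (log_le_sub_one_of_pos (by positivity)) hx.le
    _ = c - x := by field_simp

/-- Gibbs' inequality against the uniform weight `T / #s`, with `T = ∑ x`. -/
theorem sum_neg_mul_log_div_sum_le {ι : Type*} (s : Finset ι) (x : ι → ℝ)
    (hx : ∀ i ∈ s, 0 ≤ x i) :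
    ∑ i ∈ s, -(x i * log (x i / ∑ j ∈ s, x j)) ≤ (∑ i ∈ s, x i) * log #s := by
  set T := ∑ j ∈ s, x j with hTdef
  rcases (sum_nonneg hx).eq_or_lt with hT | hT <;> rw [← hTdef] at hT
  · have hzero : ∀ i ∈ s, x i = 0 := (sum_eq_zero_iff_of_nonneg hx).mp hT.symm
    rw [← hT, zero_mul]
    exact (sum_eq_zero fun i hi => by simp [hzero i hi]).le
  have hs : (0 : ℝ) < #s := by
    exact_mod_cast card_pos.mpr (nonempty_of_sum_ne_zero hT.ne')
  have hterm : ∀ i ∈ s, -(x i * log (x i / T)) ≤ (T / #s - x i) + x i * log #s := by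
    intro i hi
    rcases (hx i hi).eq_or_lt with hxi | hxi
    · simp only [← hxi, zero_mul, neg_zero, sub_zero]
      positivity
    have hsplit : -(x i * log (x i / T)) = x i * log (T / #s / x i) + x i * log #s := by
      rw [log_div hxi.ne' hT.ne', log_div (by positivity) hxi.ne', log_div hT.ne' hs.ne']
      ring
    rw [hsplit]
    gcongr
    exact mul_log_div_le_sub hxi.le (by positivity)
  calc ∑ i ∈ s, -(x i * log (x i / T))
      ≤ ∑ i ∈ s, ((T / #s - x i) + x i * log #s) := sum_le_sum hterm
    _ = T * log #s := by
      rw [sum_add_distrib, sum_sub_distrib, ← sum_mul, sum_const, nsmul_eq_mul]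
      field_simp
      ring

theorem sum_neg_mul_logb_div_sum_le {ι : Type*} {b : ℝ} (hb : 1 ≤ b) (s : Finset ι)
    (x : ι → ℝ) (hx : ∀ i ∈ s, 0 ≤ x i) :
    ∑ i ∈ s, -(x i * logb b (x i / ∑ j ∈ s, x j)) ≤ (∑ i ∈ s, x i) * logb b #s := by
  simp only [logb, mul_div_assoc', ← neg_div, ← sum_div]
  exact div_le_div_of_nonneg_right (sum_neg_mul_log_div_sum_le s x hx) (log_nonneg hb)

theorem logb_natCast_le_logb_natCast {b : ℝ} (hb : 1 ≤ b) {m n : ℕ} (h : m ≤ n) :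
    logb b m ≤ logb b n := by
  rcases m.eq_zero_or_pos with rfl | hm
  · rw [Nat.cast_zero, logb_zero]
    exact div_nonneg (log_natCast_nonneg n) (log_nonneg hb)
  exact div_le_div_of_nonneg_right (log_le_log (by positivity) (by exact_mod_cast h))
    (log_nonneg hb)

end Real

open Real

theorem sFun_le_neg_mul_logb {T x y : ℝ} (hx : 0 ≤ x) (hxT : x ≤ T) (hy : 0 ≤ y)
    (hyx : y ≤ 2 * x) : sFun T x y ≤ -(x * logb 2 (x / T)) := by
  unfold sFun
  split_ifs with hx0
  · simp [hx0]
  have hlog : logb 2 (x / T) ≤ 0 :=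
    logb_nonpos one_lt_two (div_nonneg hx (hx.trans hxT)) (div_le_one_of_le₀ hxT (hx.trans hxT))
  have habs : |x - y| ≤ x := abs_le.mpr ⟨by linarith, by linarith⟩
  simpa using mul_le_mul_of_nonpos_right habs hlog

theorem tildeS_le_logb_max_card_general
    (m : ℕ) (d : Fin m → ℕ)
    (x y : (j : Fin m) → Fin (d j) → ℝ)
    (hx : ∀ j i, 0 ≤ x j i) (hy : ∀ j i, 0 ≤ y j i)
    (hxs : ∑ j, ∑ i, x j i = 1)
    (hyx : ∀ j i, y j i ≤ 2 * x j i) :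
    ∑ j, ∑ i, sFun (∑ i', x j i') (x j i) (y j i) ≤
      Real.logb 2 ((univ.sup d : ℕ) : ℝ) := by
  have hgroup : ∀ j, ∑ i, sFun (∑ i', x j i') (x j i) (y j i) ≤
      (∑ i', x j i') * logb 2 (univ.sup d : ℕ) := fun j =>
    calc ∑ i, sFun (∑ i', x j i') (x j i) (y j i)
        ≤ ∑ i, -(x j i * logb 2 (x j i / ∑ i', x j i')) :=
          sum_le_sum fun i _ => sFun_le_neg_mul_logb (hx j i)
            (single_le_sum (fun i' _ => hx j i') (mem_univ i)) (hy j i) (hyx j i)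
      _ ≤ (∑ i', x j i') * logb 2 (d j : ℕ) := by
          simpa using sum_neg_mul_logb_div_sum_le one_le_two univ (x j) fun i _ => hx j i
      _ ≤ (∑ i', x j i') * logb 2 (univ.sup d : ℕ) :=
          mul_le_mul_of_nonneg_left (logb_natCast_le_logb_natCast one_le_two (le_sup (mem_univ j)))
            (sum_nonneg fun i _ => hx j i)
  calc ∑ j, ∑ i, sFun (∑ i', x j i') (x j i) (y j i)
      ≤ ∑ j, (∑ i, x j i) * logb 2 (univ.sup d : ℕ) := sum_le_sum fun j _ => hgroup j
    _ = logb 2 (univ.sup d : ℕ) := by rw [← sum_mul, hxs, one_mul]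

/-- if `y_i^j ≤ 2 x_i^j` for all `i, j`, then
`S̃(X, Y) ≤ log₂ (max_j d_j)`. -/
theorem tildeS_le_logb_max_card
    (m : ℕ) (hm : 0 < m) (d : Fin m → ℕ) (hd : ∀ j, 1 ≤ d j)
    (x y : (j : Fin m) → Fin (d j) → ℝ)
    (hx : ∀ j i, 0 ≤ x j i) (hy : ∀ j i, 0 ≤ y j i)
    (hxs : ∑ j, ∑ i, x j i = 1) (hys : ∑ j, ∑ i, y j i = 1)
    (hyx : ∀ j i, y j i ≤ 2 * x j i) :
    ∑ j, ∑ i, sFun (∑ i', x j i') (x j i) (y j i) ≤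
      Real.logb 2 ((univ.sup d : ℕ) : ℝ) :=
  tildeS_le_logb_max_card_general m d x y hx hy hxs hyx

end
end

section
/- If a bipartite density matrix ρ^{AB} has a product eigenbasis, then the measure M(ρ^{AB}) = (M^A(ρ^{AB}) + M^B(ρ^{AB}))/2 vanishes, where M^A(ρ^{AB}) = −Σ_{j=1}^m Σ_{i=1}^{d_j^A} |λ_i^{j,A} − nim_{η_j}(λ_i^{j,A})| log₂(λ_i^{j,A}/(η_j d^{η_j})), with η_1,…,η_m the distinct eigenvalues of ρ^{AB}, λ_i^{j,A} the nonzero eigenvalues of Tr_B ρ̃^{η_j}, and d^{η_j} the dimension of the η_j-eigenspace; M^B is defined analogously. -/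
open Matrix Kronecker Finset
open scoped ComplexOrder

attribute [local instance] Classical.propDecidable

noncomputable section

/-!
With the product eigenbasis as the columns of `U = Uₐ ⊗ U_b` we have `ρ = U D U*`, `D` diagonal.
Two unitary diagonalisations `U D U* = W D' W*` are intertwined by `W* U`, which only connects
equal eigenvalues; so the `η`-eigenprojection of `ρ` is `U 1_{D = η} U*`, and each eigenvalue of
`U D U*` is a diagonal entry of `D`. Tracing out `B` in the product basis gives
`Tr_B ρ̃^η = Uₐ diag(η · #{k | e_{jk} = η}) Uₐ*`, whose eigenvalues are integer multiples of `η`.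
Such a `λ` equals `nim_η λ`, so every term of `M^A` vanishes, and likewise for `M^B`.
-/

namespace Matrix

section Intertwining

variable {m n R : Type*} [Fintype m] [Fintype n] [DecidableEq m] [DecidableEq n]
  [CommRing R] [NoZeroDivisors R] {X : Matrix m n R} {d : n → R} {d' : m → R}

lemma eq_of_mul_diagonal_eq_diagonal_mul (hX : X * diagonal d = diagonal d' * X) {i : m} {j : n}
    (hij : X i j ≠ 0) : d' i = d j := by
  have h := congrFun (congrFun hX i) j
  rw [mul_diagonal, diagonal_mul, mul_comm] at h
  exact (mul_right_cancel₀ hij h).symm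

lemma mul_diagonal_comp_eq_diagonal_comp_mul (hX : X * diagonal d = diagonal d' * X)
    (f : R → R) : X * diagonal (f ∘ d) = diagonal (f ∘ d') * X := by
  ext i j
  rw [mul_diagonal, diagonal_mul]
  by_cases hij : X i j = 0
  · simp [hij]
  · simp [eq_of_mul_diagonal_eq_diagonal_mul hX hij, mul_comm]

end Intertwining

section UnitaryConj

variable {n R : Type*} [Fintype n] [DecidableEq n] [CommRing R] [StarRing R]
  {U W : Matrix n n R} {d d' : n → R}

lemma star_mul_mul_diagonal_eq_of_conj_eq (hU : U ∈ unitaryGroup n R)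
    (hW : W ∈ unitaryGroup n R) (h : U * diagonal d * star U = W * diagonal d' * star W) :
    star W * U * diagonal d = diagonal d' * (star W * U) := by
  calc star W * U * diagonal d = star W * (U * diagonal d * star U) * U := by
        simp [mul_assoc, Unitary.star_mul_self_of_mem hU]
    _ = diagonal d' * (star W * U) := by
        simp [h, ← mul_assoc, Unitary.star_mul_self_of_mem hW]

lemma conj_diagonal_comp_eq_of_conj_eq [NoZeroDivisors R] (hU : U ∈ unitaryGroup n R)
    (hW : W ∈ unitaryGroup n R) (h : U * diagonal d * star U = W * diagonal d' * star W)
    (f : R → R) : U * diagonal (f ∘ d) * star U = W * diagonal (f ∘ d') * star W := by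
  have hX := mul_diagonal_comp_eq_diagonal_comp_mul (star_mul_mul_diagonal_eq_of_conj_eq hU hW h) f
  calc U * diagonal (f ∘ d) * star U = W * (star W * U * diagonal (f ∘ d)) * star U := by
        simp [← mul_assoc, Unitary.mul_star_self_of_mem hW]
    _ = W * diagonal (f ∘ d') * star W := by
        rw [hX]
        simp [mul_assoc, Unitary.mul_star_self_of_mem hU]

lemma exists_eq_of_conj_eq [IsDomain R] (hU : U ∈ unitaryGroup n R) (hW : W ∈ unitaryGroup n R)
    (h : U * diagonal d * star U = W * diagonal d' * star W) (i : n) : ∃ j, d' i = d j := by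
  have hrow : ∃ j, (star W * U) i j ≠ 0 := by
    by_contra! h0
    have hWU : star W * U ∈ unitaryGroup n R := Submonoid.mul_mem _ (Unitary.star_mem hW) hU
    have := congrArg (fun M : Matrix n n R => M i i) (Unitary.mul_star_self_of_mem hWU)
    simp [mul_apply, h0] at this
  obtain ⟨j, hj⟩ := hrow
  exact ⟨j, eq_of_mul_diagonal_eq_diagonal_mul (star_mul_mul_diagonal_eq_of_conj_eq hU hW h) hj⟩

lemma of_mem_unitaryGroup_iff (v : n → n → R) : (of fun i j => v j i) ∈ unitaryGroup n R ↔
    ∀ j j', ∑ i, star (v j i) * v j' i = if j = j' then 1 else 0 := by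
  simp [mem_unitaryGroup_iff', ← Matrix.ext_iff, mul_apply, one_apply]

end UnitaryConj

lemma mul_diagonal_mul_conjTranspose_eq_sum {m n R : Type*} [Fintype n] [DecidableEq n]
    [CommSemiring R] [StarRing R] (U : Matrix m n R) (c : n → R) :
    U * diagonal c * Uᴴ = ∑ k, c k • vecMulVec (fun i => U i k) (star fun i => U i k) := by
  ext i j
  rw [mul_apply]
  simp [mul_diagonal, sum_apply, vecMulVec_apply, mul_assoc, mul_left_comm]

lemma isHermitian_conj_diagonal_ofReal {n : Type*} [Fintype n] [DecidableEq n]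
    (U : Matrix n n ℂ) (d : n → ℝ) : (U * diagonal (fun i => (d i : ℂ)) * star U).IsHermitian :=
  isHermitian_mul_mul_conjTranspose U (isHermitian_diagonal_of_self_adjoint _
    (funext fun i => Complex.conj_ofReal (d i)))

lemma IsHermitian.eq_conj_diagonal_eigenvalues {n : Type*} [Fintype n] [DecidableEq n]
    {A : Matrix n n ℂ} (hA : A.IsHermitian) :
    A = (hA.eigenvectorUnitary : Matrix n n ℂ) * diagonal (fun k => (hA.eigenvalues k : ℂ)) *
      star (hA.eigenvectorUnitary : Matrix n n ℂ) := by
  conv_lhs => rw [hA.spectral_theorem, Unitary.conjStarAlgAut_apply]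
  rfl

end Matrix

section Spectral

variable {n : Type*} [Fintype n] [DecidableEq n] {U : Matrix n n ℂ}

lemma Matrix.IsHermitian.eigProj_eq {A : Matrix n n ℂ} (hA : A.IsHermitian) (η : ℝ) :
    eigProj A η = (hA.eigenvectorUnitary : Matrix n n ℂ) *
      diagonal (fun k => if hA.eigenvalues k = η then 1 else 0) *
        star (hA.eigenvectorUnitary : Matrix n n ℂ) := by
  rw [eigProj, dif_pos hA, star_eq_conjTranspose, mul_diagonal_mul_conjTranspose_eq_sum,
    sum_filter]
  simp [ite_smul]

lemma exists_evalsR_conj_diagonal_eq (hU : U ∈ unitaryGroup n ℂ) (d : n → ℝ) (i : n) :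
    ∃ j, evalsR (U * diagonal (fun k => (d k : ℂ)) * star U) i = d j := by
  have hA := isHermitian_conj_diagonal_ofReal U d
  obtain ⟨j, hj⟩ :=
    exists_eq_of_conj_eq hU hA.eigenvectorUnitary.2 hA.eq_conj_diagonal_eigenvalues i
  exact ⟨j, by rw [evalsR, dif_pos hA]; exact_mod_cast hj⟩

lemma eigProj_conj_diagonal (hU : U ∈ unitaryGroup n ℂ) (d : n → ℝ) (η : ℝ) :
    eigProj (U * diagonal (fun k => (d k : ℂ)) * star U) η =
      U * diagonal (fun k => if d k = η then 1 else 0) * star U := by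
  have hA := isHermitian_conj_diagonal_ofReal U d
  have := conj_diagonal_comp_eq_of_conj_eq hU hA.eigenvectorUnitary.2
    hA.eq_conj_diagonal_eigenvalues (fun z => if z = η then 1 else 0)
  rw [hA.eigProj_eq]
  simpa [Function.comp_def] using this.symm

lemma trunc_conj_diagonal (hU : U ∈ unitaryGroup n ℂ) (d : n → ℝ) (η : ℝ) :
    trunc (U * diagonal (fun k => (d k : ℂ)) * star U) η =
      U * diagonal (fun k => ((if d k = η then η else 0 : ℝ) : ℂ)) * star U := by
  rw [trunc, eigProj_conj_diagonal hU, ← Matrix.smul_mul, ← Matrix.mul_smul, ← diagonal_smul]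
  congr 3 with k
  by_cases h : d k = η <;> simp [h]

end Spectral

section PartialTrace

variable {α β α' β' : Type*} [Fintype α] [Fintype β] [Fintype α'] [Fintype β']

lemma ptraceB_kronecker_mul_mul_conjTranspose [DecidableEq β] (A : Matrix α' α ℂ)
    {B : Matrix β' β ℂ} (hB : Bᴴ * B = 1) (M : Matrix (α × β) (α × β) ℂ) :
    ptraceB ((A ⊗ₖ B) * M * (A ⊗ₖ B)ᴴ) = A * ptraceB M * Aᴴ := by
  ext i i'
  have hB' : ∀ k k', ∑ l, star (B l k') * B l k = if k' = k then 1 else 0 := fun k k' => by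
    simpa [mul_apply, one_apply] using congrArg (fun N : Matrix β β ℂ => N k' k) hB
  calc ptraceB ((A ⊗ₖ B) * M * (A ⊗ₖ B)ᴴ) i i'
      = ∑ p, ∑ q, A i p.1 * M p q * star (A i' q.1) * ∑ l, star (B l q.2) * B l p.2 := by
        simp only [ptraceB, mul_apply, kroneckerMap_apply, conjTranspose_apply, star_mul',
          Finset.sum_mul, Finset.mul_sum]
        rw [Finset.sum_comm, Finset.sum_congr rfl fun _ _ => Finset.sum_comm, Finset.sum_comm]
        refine sum_congr rfl fun p _ => sum_congr rfl fun q _ => sum_congr rfl fun l _ => ?_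
        ring
    _ = (A * ptraceB M * Aᴴ) i i' := by
        simp only [hB', mul_ite, mul_one, mul_zero, Fintype.sum_prod_type, ptraceB, mul_apply,
          conjTranspose_apply, Finset.sum_mul, Finset.mul_sum, Finset.sum_ite_eq',
          Finset.mem_univ, if_true]
        exact (sum_congr rfl fun _ _ => sum_comm).trans sum_comm

lemma ptraceA_eq_ptraceB_submatrix_swap (M : Matrix (α × β) (α × β) ℂ) :
    ptraceA M = ptraceB (M.submatrix Prod.swap Prod.swap) := rfl

lemma ptraceA_kronecker_mul_mul_conjTranspose [DecidableEq α] {A : Matrix α' α ℂ}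
    (hA : Aᴴ * A = 1) (B : Matrix β' β ℂ) (M : Matrix (α × β) (α × β) ℂ) :
    ptraceA ((A ⊗ₖ B) * M * (A ⊗ₖ B)ᴴ) = B * ptraceA M * Bᴴ := by
  have hswap : (A ⊗ₖ B).submatrix Prod.swap Prod.swap = B ⊗ₖ A := by
    ext p q
    exact mul_comm _ _
  rw [ptraceA_eq_ptraceB_submatrix_swap, ptraceA_eq_ptraceB_submatrix_swap,
    ← ptraceB_kronecker_mul_mul_conjTranspose B hA, ← hswap]
  simp only [conjTranspose_submatrix, ← Equiv.coe_prodComm, submatrix_mul_equiv]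

variable [DecidableEq α] [DecidableEq β]

lemma ptraceB_diagonal (D : α × β → ℂ) :
    ptraceB (diagonal D) = diagonal fun j => ∑ k, D (j, k) := by
  ext j j'
  by_cases h : j = j' <;> simp [ptraceB, h]

lemma ptraceA_diagonal (D : α × β → ℂ) :
    ptraceA (diagonal D) = diagonal fun k => ∑ j, D (j, k) := by
  ext k k'
  by_cases h : k = k' <;> simp [ptraceA, h]

end PartialTrace

section ProductEigenbasis

variable {α β : Type*} [Fintype α] [Fintype β] [DecidableEq α] [DecidableEq β]

lemma HasProductEigenbasis.exists_eq_kronecker_conj {ρ : Matrix (α × β) (α × β) ℂ}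
    (h : HasProductEigenbasis ρ) : ∃ (Ua : Matrix α α ℂ) (Ub : Matrix β β ℂ) (e : α × β → ℝ),
      Ua ∈ unitaryGroup α ℂ ∧ Ub ∈ unitaryGroup β ℂ ∧
        ρ = (Ua ⊗ₖ Ub) * diagonal (fun p => (e p : ℂ)) * star (Ua ⊗ₖ Ub) := by
  obtain ⟨a, b, e, ha, hb, rfl⟩ := h
  refine ⟨of fun i j => a j i, of fun i j => b j i, fun p => e p.1 p.2,
    (of_mem_unitaryGroup_iff a).2 ha, (of_mem_unitaryGroup_iff b).2 hb, ?_⟩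
  rw [star_eq_conjTranspose, mul_diagonal_mul_conjTranspose_eq_sum, Fintype.sum_prod_type]
  refine sum_congr rfl fun j _ => sum_congr rfl fun k _ => ?_
  congr 1
  ext p q
  simp [vecMulVec_apply]
  ring

variable {Ua : Matrix α α ℂ} {Ub : Matrix β β ℂ}

lemma exists_evalsR_ptraceB_trunc_eq_mul_natCast (hUa : Ua ∈ unitaryGroup α ℂ)
    (hUb : Ub ∈ unitaryGroup β ℂ) (e : α × β → ℝ) (η : ℝ) (i : α) :
    ∃ m : ℕ, evalsR (ptraceB (trunc ((Ua ⊗ₖ Ub) * diagonal (fun p => (e p : ℂ)) *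
      star (Ua ⊗ₖ Ub)) η)) i = η * m := by
  have hpt : ptraceB (trunc ((Ua ⊗ₖ Ub) * diagonal (fun p => (e p : ℂ)) * star (Ua ⊗ₖ Ub)) η) =
      Ua * diagonal (fun j => ((η * #{k | e (j, k) = η} : ℝ) : ℂ)) * star Ua := by
    rw [trunc_conj_diagonal (kronecker_mem_unitary hUa hUb), star_eq_conjTranspose,
      ptraceB_kronecker_mul_mul_conjTranspose _ (Unitary.star_mul_self_of_mem hUb),
      ptraceB_diagonal, star_eq_conjTranspose]
    congr 2
    refine congrArg diagonal (funext fun j => ?_)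
    rw [← Complex.ofReal_sum, Finset.sum_ite, sum_const, sum_const_zero, nsmul_eq_mul, add_zero,
      mul_comm]
  obtain ⟨j, hj⟩ := exists_evalsR_conj_diagonal_eq hUa _ i
  exact ⟨_, hpt ▸ hj⟩

lemma exists_evalsR_ptraceA_trunc_eq_mul_natCast (hUa : Ua ∈ unitaryGroup α ℂ)
    (hUb : Ub ∈ unitaryGroup β ℂ) (e : α × β → ℝ) (η : ℝ) (i : β) :
    ∃ m : ℕ, evalsR (ptraceA (trunc ((Ua ⊗ₖ Ub) * diagonal (fun p => (e p : ℂ)) *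
      star (Ua ⊗ₖ Ub)) η)) i = η * m := by
  have hpt : ptraceA (trunc ((Ua ⊗ₖ Ub) * diagonal (fun p => (e p : ℂ)) * star (Ua ⊗ₖ Ub)) η) =
      Ub * diagonal (fun k => ((η * #{j | e (j, k) = η} : ℝ) : ℂ)) * star Ub := by
    rw [trunc_conj_diagonal (kronecker_mem_unitary hUa hUb), star_eq_conjTranspose,
      ptraceA_kronecker_mul_mul_conjTranspose (Unitary.star_mul_self_of_mem hUa),
      ptraceA_diagonal, star_eq_conjTranspose]
    congr 2
    refine congrArg diagonal (funext fun k => ?_)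
    rw [← Complex.ofReal_sum, Finset.sum_ite, sum_const, sum_const_zero, nsmul_eq_mul, add_zero,
      mul_comm]
  obtain ⟨k, hk⟩ := exists_evalsR_conj_diagonal_eq hUb _ i
  exact ⟨_, hpt ▸ hk⟩

end ProductEigenbasis

lemma nim_mul_natCast (η : ℝ) (m : ℕ) : nim η (η * m) = η * m := by
  rcases eq_or_ne η 0 with rfl | hη
  · simp [nim]
  · simp [nim, hη]

lemma Mterm_mul_natCast (η T : ℝ) (m : ℕ) : Mterm η T (η * m) = 0 := by
  simp [Mterm, nim_mul_natCast]

theorem Mmeas_eq_zero_of_hasProductEigenbasis_general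
    {α β : Type*} [Fintype α] [Fintype β] [DecidableEq α] [DecidableEq β]
    (ρ : Matrix (α × β) (α × β) ℂ)
    (hpe : HasProductEigenbasis ρ) :
    Mmeas ρ = 0 := by
  obtain ⟨Ua, Ub, e, hUa, hUb, rfl⟩ := hpe.exists_eq_kronecker_conj
  have hA : MmeasA ((Ua ⊗ₖ Ub) * diagonal (fun p => (e p : ℂ)) * star (Ua ⊗ₖ Ub)) = 0 :=
    sum_eq_zero fun η _ => sum_eq_zero fun i _ => by
      obtain ⟨m, hm⟩ := exists_evalsR_ptraceB_trunc_eq_mul_natCast hUa hUb e η i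
      rw [hm, Mterm_mul_natCast]
  have hB : MmeasB ((Ua ⊗ₖ Ub) * diagonal (fun p => (e p : ℂ)) * star (Ua ⊗ₖ Ub)) = 0 :=
    sum_eq_zero fun η _ => sum_eq_zero fun i _ => by
      obtain ⟨m, hm⟩ := exists_evalsR_ptraceA_trunc_eq_mul_natCast hUa hUb e η i
      rw [hm, Mterm_mul_natCast]
  rw [Mmeas, hA, hB, add_zero, zero_div]

/-- the measure `M` vanishes for any bipartite density matrix having a
product eigenbasis. -/
theorem Mmeas_eq_zero_of_hasProductEigenbasis
    {α β : Type*} [Fintype α] [Fintype β] [DecidableEq α] [DecidableEq β]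
    (ρ : Matrix (α × β) (α × β) ℂ) (hρ : IsDensityMatrix ρ)
    (hpe : HasProductEigenbasis ρ) :
    Mmeas ρ = 0 :=
  Mmeas_eq_zero_of_hasProductEigenbasis_general ρ hpe
end
end

section
/- For any density matrix ρ on an N×N-dimensional bipartite system (dim H_A = dim H_B = N), the measure M satisfies M(ρ) ≤ log₂ N. -/
open Matrix Kronecker Finset
open scoped ComplexOrder

attribute [local instance] Classical.propDecidable

noncomputable section

/-! Since `nim_η(λ)` lies between `0` and `2λ`, the weight `|λ - nim_η(λ)|` is at most `λ`, while
`log₂ (λ / T) ≤ 0`. Hence the `η`-block of `M^A` is bounded by `T_η` times the Shannon entropy of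
the normalized spectrum of `Tr_B (η P_η)`, which is at most `T_η log₂ N`; and the block traces
`T_η = η · dim P_η` add up to `tr ρ = 1`. The same holds for `M^B`. -/

open Real

section Entropy

variable {ι : Type*} [Fintype ι]

theorem sum_negMulLog_le_log_card {p : ι → ℝ} (hp : ∀ i, 0 ≤ p i) (hsum : ∑ i, p i = 1) :
    ∑ i, negMulLog (p i) ≤ log (Fintype.card ι) := by
  have hι : Nonempty ι := by
    by_contra h
    simp [not_nonempty_iff.mp h] at hsum
  have hcard : (0 : ℝ) < Fintype.card ι := by exact_mod_cast Fintype.card_pos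
  have hw : ∑ _i : ι, (Fintype.card ι : ℝ)⁻¹ = 1 := by simp [hcard.ne']
  have jensen := concaveOn_negMulLog.le_map_sum (t := univ) (w := fun _ => (Fintype.card ι : ℝ)⁻¹)
    (p := p) (fun _ _ => by positivity) hw (fun i _ => Set.mem_Ici.mpr (hp i))
  rwa [← Finset.smul_sum, ← Finset.smul_sum, hsum, smul_eq_mul, smul_eq_mul, mul_one, negMulLog,
    log_inv, neg_mul_neg, mul_le_mul_iff_of_pos_left (inv_pos.mpr hcard)] at jensen

theorem neg_mul_log_div_eq_mul_negMulLog (x T : ℝ) :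
    -(x * log (x / T)) = T * negMulLog (x / T) := by
  rcases eq_or_ne T 0 with rfl | hT
  · simp
  · rw [negMulLog]
    field_simp

theorem sum_neg_mul_logb_div_le {b : ℝ} (hb : 1 ≤ b) {lam : ι → ℝ} {T : ℝ}
    (hlam : ∀ i, 0 ≤ lam i) (hsum : ∑ i, lam i = T) :
    ∑ i, -(lam i * logb b (lam i / T)) ≤ T * logb b (Fintype.card ι) := by
  rcases (hsum ▸ Finset.sum_nonneg fun i _ => hlam i : 0 ≤ T).eq_or_lt with rfl | hT
  · simp
  have hp : ∑ i, lam i / T = 1 := by rw [← Finset.sum_div, hsum, div_self hT.ne']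
  calc ∑ i, -(lam i * logb b (lam i / T))
      = T * (∑ i, negMulLog (lam i / T)) / log b := by
        simp only [logb, Finset.mul_sum, Finset.sum_div, ← neg_mul_log_div_eq_mul_negMulLog]
        exact Finset.sum_congr rfl fun i _ => by ring
    _ ≤ T * log (Fintype.card ι) / log b := by
        gcongr
        · exact log_nonneg hb
        · exact sum_negMulLog_le_log_card (fun i => div_nonneg (hlam i) hT.le) hp
    _ = T * logb b (Fintype.card ι) := mul_div_assoc _ _ _

end Entropy

theorem abs_sub_nim_le {y x : ℝ} (hy : 0 ≤ y) (hx : 0 ≤ x) : |x - nim y x| ≤ x := by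
  rcases hy.eq_or_lt with rfl | hy
  · simp [nim, abs_of_nonneg hx]
  have hfloor : y * ⌊x / y⌋ ≤ x := by
    rw [mul_comm, ← le_div_iff₀ hy]
    exact Int.floor_le _
  have hfloor_nonneg : 0 ≤ y * ⌊x / y⌋ :=
    mul_nonneg hy.le (by exact_mod_cast Int.floor_nonneg.mpr (div_nonneg hx hy.le))
  have hceil : x ≤ y * ⌈x / y⌉ := by
    rw [mul_comm, ← div_le_iff₀ hy]
    exact Int.le_ceil _
  rw [nim, if_neg hy.ne']
  split_ifs with hnearer
  · rw [abs_of_nonneg (by linarith)]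
    linarith
  · rw [abs_of_nonpos (by linarith)]
    linarith

theorem Mterm_le {η T x : ℝ} (hη : 0 ≤ η) (hx : 0 ≤ x) (hxT : x ≤ T) :
    Mterm η T x ≤ -(x * logb 2 (x / T)) := by
  have hlog : logb 2 (x / T) ≤ 0 :=
    logb_nonpos one_lt_two (div_nonneg hx (hx.trans hxT)) (div_le_one_of_le₀ hxT (hx.trans hxT))
  exact neg_le_neg (mul_le_mul_of_nonpos_right (abs_sub_nim_le hη hx) hlog)

theorem sum_Mterm_le {ι : Type*} [Fintype ι] {η T : ℝ} (hη : 0 ≤ η) {lam : ι → ℝ}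
    (hlam : ∀ i, 0 ≤ lam i) (hsum : ∑ i, lam i = T) :
    ∑ i, Mterm η T (lam i) ≤ T * logb 2 (Fintype.card ι) := by
  have hle : ∀ i, lam i ≤ T := fun i =>
    hsum ▸ Finset.single_le_sum (fun j _ => hlam j) (mem_univ i)
  exact (Finset.sum_le_sum fun i _ => Mterm_le hη (hlam i) (hle i)).trans
    (sum_neg_mul_logb_div_le one_le_two hlam hsum)

section Spectrum

variable {n : Type*} [Fintype n] [DecidableEq n]

theorem evalsR_nonneg {A : Matrix n n ℂ} (hA : A.PosSemidef) (i : n) : 0 ≤ evalsR A i := by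
  rw [evalsR, dif_pos hA.1]
  exact hA.eigenvalues_nonneg i

theorem ofReal_sum_evalsR {A : Matrix n n ℂ} (hA : A.IsHermitian) :
    ((∑ i, evalsR A i : ℝ) : ℂ) = A.trace := by
  rw [hA.trace_eq_sum_eigenvalues, evalsR, dif_pos hA]
  push_cast
  rfl

theorem sum_Mterm_evalsR_le {η T : ℝ} (hη : 0 ≤ η) {σ : Matrix n n ℂ} (hσ : σ.PosSemidef)
    (htr : σ.trace = T) : ∑ i, Mterm η T (evalsR σ i) ≤ T * logb 2 (Fintype.card n) :=
  sum_Mterm_le hη (evalsR_nonneg hσ) (by exact_mod_cast (ofReal_sum_evalsR hσ.1).trans htr)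

theorem posSemidef_eigProj (ρ : Matrix n n ℂ) (η : ℝ) : (eigProj ρ η).PosSemidef := by
  rw [eigProj]
  split_ifs
  · exact posSemidef_sum _ fun k _ => posSemidef_vecMulVec_self_star _
  · exact .zero

theorem trace_eigProj (ρ : Matrix n n ℂ) (η : ℝ) : (eigProj ρ η).trace = dimEig ρ η := by
  rw [eigProj, dimEig]
  split_ifs with hρ
  · have hunit : ∀ k, (fun i => hρ.eigenvectorBasis k i) ⬝ᵥ star (fun i => hρ.eigenvectorBasis k i)
        = 1 := fun k => hρ.eigenvectorBasis.inner_eq_one k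
    simp [trace_sum, hunit]
  · simp

theorem posSemidef_trunc (ρ : Matrix n n ℂ) {η : ℝ} (hη : 0 ≤ η) : (trunc ρ η).PosSemidef :=
  (posSemidef_eigProj ρ η).smul (Complex.zero_le_real.mpr hη)

theorem trace_trunc (ρ : Matrix n n ℂ) (η : ℝ) :
    (trunc ρ η).trace = ((η * dimEig ρ η : ℝ) : ℂ) := by
  rw [trunc, trace_smul, trace_eigProj, smul_eq_mul]
  push_cast
  rfl

theorem sum_image_evalsR_mul_dimEig {ρ : Matrix n n ℂ} (hρ : ρ.IsHermitian) :
    ∑ η ∈ univ.image (evalsR ρ), η * dimEig ρ η = ∑ i, evalsR ρ i := by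
  rw [Finset.sum_comp (fun x => x) (evalsR ρ)]
  refine Finset.sum_congr rfl fun η _ => ?_
  rw [dimEig, dif_pos hρ, nsmul_eq_mul, mul_comm, evalsR, dif_pos hρ]

end Spectrum

section PartialTrace

variable {α β : Type*} [Fintype α] [Fintype β]

theorem ptraceB_eq_sum_submatrix (ρ : Matrix (α × β) (α × β) ℂ) :
    ptraceB ρ = ∑ b, ρ.submatrix (·, b) (·, b) := by
  ext a a'
  simp [ptraceB, Matrix.sum_apply]

theorem ptraceA_eq_sum_submatrix (ρ : Matrix (α × β) (α × β) ℂ) :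
    ptraceA ρ = ∑ a, ρ.submatrix (a, ·) (a, ·) := by
  ext b b'
  simp [ptraceA, Matrix.sum_apply]

theorem Matrix.PosSemidef.ptraceB {ρ : Matrix (α × β) (α × β) ℂ} (hρ : ρ.PosSemidef) :
    (ptraceB ρ).PosSemidef := by
  rw [ptraceB_eq_sum_submatrix]
  exact posSemidef_sum _ fun b _ => hρ.submatrix _

theorem Matrix.PosSemidef.ptraceA {ρ : Matrix (α × β) (α × β) ℂ} (hρ : ρ.PosSemidef) :
    (ptraceA ρ).PosSemidef := by
  rw [ptraceA_eq_sum_submatrix]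
  exact posSemidef_sum _ fun a _ => hρ.submatrix _

theorem trace_ptraceB (ρ : Matrix (α × β) (α × β) ℂ) : (ptraceB ρ).trace = ρ.trace := by
  simp only [trace, Matrix.diag, ptraceB, Fintype.sum_prod_type]

theorem trace_ptraceA (ρ : Matrix (α × β) (α × β) ℂ) : (ptraceA ρ).trace = ρ.trace := by
  simp only [trace, Matrix.diag, ptraceA, Fintype.sum_prod_type_right]

end PartialTrace

theorem sum_Mterm_evalsR_trunc_le {n m : Type*} [Fintype n] [DecidableEq n] [Fintype m]
    [DecidableEq m] {ρ : Matrix n n ℂ} (hρ : IsDensityMatrix ρ)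
    (Φ : Matrix n n ℂ → Matrix m m ℂ) (hΦ_pos : ∀ σ, σ.PosSemidef → (Φ σ).PosSemidef)
    (hΦ_trace : ∀ σ, (Φ σ).trace = σ.trace) :
    ∑ η ∈ univ.image (evalsR ρ), ∑ i, Mterm η (η * dimEig ρ η) (evalsR (Φ (trunc ρ η)) i)
      ≤ logb 2 (Fintype.card m) := by
  obtain ⟨hpos, htr⟩ := hρ
  have heigen_sum : ∑ η ∈ univ.image (evalsR ρ), η * dimEig ρ η = 1 := by
    rw [sum_image_evalsR_mul_dimEig hpos.1]
    exact_mod_cast (ofReal_sum_evalsR hpos.1).trans htr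
  calc _ ≤ ∑ η ∈ univ.image (evalsR ρ), η * dimEig ρ η * logb 2 (Fintype.card m) := by
        refine Finset.sum_le_sum fun η hη => ?_
        obtain ⟨k, -, rfl⟩ := Finset.mem_image.mp hη
        have hη0 := evalsR_nonneg hpos k
        exact sum_Mterm_evalsR_le hη0 (hΦ_pos _ (posSemidef_trunc ρ hη0))
          ((hΦ_trace _).trans (trace_trunc ρ _))
    _ = logb 2 (Fintype.card m) := by rw [← Finset.sum_mul, heigen_sum, one_mul]

theorem MmeasA_le_logb_card {α β : Type*} [Fintype α] [Fintype β] [DecidableEq α] [DecidableEq β]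
    {ρ : Matrix (α × β) (α × β) ℂ} (hρ : IsDensityMatrix ρ) :
    MmeasA ρ ≤ logb 2 (Fintype.card α) :=
  sum_Mterm_evalsR_trunc_le hρ ptraceB (fun _ hσ => hσ.ptraceB) trace_ptraceB

theorem MmeasB_le_logb_card {α β : Type*} [Fintype α] [Fintype β] [DecidableEq α] [DecidableEq β]
    {ρ : Matrix (α × β) (α × β) ℂ} (hρ : IsDensityMatrix ρ) :
    MmeasB ρ ≤ logb 2 (Fintype.card β) :=
  sum_Mterm_evalsR_trunc_le hρ ptraceA (fun _ hσ => hσ.ptraceA) trace_ptraceA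

/-- for any density matrix on an `N × N`-dimensional bipartite system,
`M(ρ) ≤ log₂ N`. -/
theorem Mmeas_le_logb_dim
    (N : ℕ) (ρ : Matrix (Fin N × Fin N) (Fin N × Fin N) ℂ)
    (hρ : IsDensityMatrix ρ) :
    Mmeas ρ ≤ Real.logb 2 (N : ℝ) := by
  have hA := MmeasA_le_logb_card hρ
  have hB := MmeasB_le_logb_card hρ
  rw [Fintype.card_fin] at hA hB
  rw [Mmeas]
  linarith

end
end

section
/- For a pure bipartite state |φ⟩⟨φ|, the measure M vanishes if and only if |φ⟩ is a product state (Schmidt rank 1). In particular, M(|φ⟩⟨φ|) > 0 for every entangled pure state. -/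
open Matrix Kronecker Finset
open scoped ComplexOrder

attribute [local instance] Classical.propDecidable

noncomputable section

/-! For a pure state `ρ = |φ⟩⟨φ|` the spectrum of `ρ` is `{0, 1}` with `1` simple, so each side of
`M` collapses to `∑ₖ Mterm 1 1 cₖ`, where the `cₖ` are the eigenvalues of the reduced state `C Cᴴ`,
`C` being the coefficient matrix of `φ`. On `[0, 1]` the term `-|c - nim₁ c| log₂ c` is
nonnegative and vanishes exactly at `c ∈ {0, 1}`. As `∑ₖ cₖ = 1`, all `cₖ ∈ {0, 1}` means that
`C Cᴴ = w w*` is a rank-one projection; then `(1 - C Cᴴ) C` has zero Gram matrix, so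
`C = w (w* C)` is a product. Conversely a product `C` makes `C Cᴴ` a rank-one projection. -/

namespace Matrix

section

variable {n : Type*} [Fintype n] {R : Type*} [CommRing R]

lemma vecMulVec_mul_self (x y : n → R) :
    vecMulVec x y * vecMulVec x y = (vecMulVec x y).trace • vecMulVec x y := by
  rw [vecMulVec_mul_vecMulVec, trace_vecMulVec, dotProduct_comm, vecMulVec_smul]

lemma isIdempotentElem_vecMulVec {x y : n → R} (h : (vecMulVec x y).trace = 1) :
    IsIdempotentElem (vecMulVec x y) := by
  rw [IsIdempotentElem, vecMulVec_mul_self, h, one_smul]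

lemma exists_transpose_eq_vecMulVec_iff {m p : Type*} {C : Matrix m p R} :
    (∃ u v, Cᵀ = vecMulVec u v) ↔ ∃ u v, C = vecMulVec u v :=
  ⟨fun ⟨u, v, h⟩ => ⟨v, u, by rw [← transpose_transpose C, h, transpose_vecMulVec]⟩,
    fun ⟨u, v, h⟩ => ⟨v, u, by rw [h, transpose_vecMulVec]⟩⟩

lemma trace_transpose_mul_conjTranspose_transpose {m p : Type*} [Fintype m] [Fintype p]
    [StarRing R] (C : Matrix m p R) : (Cᵀ * Cᵀᴴ).trace = (C * Cᴴ).trace := by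
  rw [conjTranspose_transpose_eq_transpose_conjTranspose, ← transpose_mul, trace_transpose,
    trace_mul_comm]

end

namespace IsHermitian

variable {n : Type*} [Fintype n] [DecidableEq n] {A : Matrix n n ℂ} (hA : A.IsHermitian)
include hA

lemma eq_sum_eigenvalues_smul_vecMulVec :
    A = ∑ k, (hA.eigenvalues k : ℂ) •
      vecMulVec (fun i => hA.eigenvectorBasis k i) (star fun i => hA.eigenvectorBasis k i) := by
  conv_lhs => rw [hA.spectral_theorem]
  ext i j
  simp [mul_apply, diagonal, vecMulVec, Matrix.sum_apply, mul_comm, mul_assoc]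

lemma eigenvalues_eq_zero_or_one (hid : IsIdempotentElem A) (k : n) :
    hA.eigenvalues k = 0 ∨ hA.eigenvalues k = 1 := by
  simpa using hid.spectrum_subset ℝ (hA.eigenvalues_mem_spectrum_real k)

lemma sum_eigenvalues_eq_one (htr : A.trace = 1) : ∑ k, hA.eigenvalues k = 1 := by
  have h := hA.trace_eq_sum_eigenvalues
  rw [htr] at h
  simpa using congrArg Complex.re h.symm

lemma eigProj_one (h01 : ∀ k, hA.eigenvalues k = 0 ∨ hA.eigenvalues k = 1) :
    eigProj A 1 = A := by
  rw [eigProj, dif_pos hA, sum_filter]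
  conv_rhs => rw [hA.eq_sum_eigenvalues_smul_vecMulVec]
  refine sum_congr rfl fun k _ => ?_
  rcases h01 k with h | h <;> simp [h]

lemma exists_filter_eigenvalues_eq_one_eq_singleton
    (h01 : ∀ k, hA.eigenvalues k = 0 ∨ hA.eigenvalues k = 1) (htr : A.trace = 1) :
    ∃ k₀, univ.filter (fun k => hA.eigenvalues k = 1) = {k₀} := by
  apply card_eq_one.mp
  have h := hA.sum_eigenvalues_eq_one htr
  rw [sum_congr rfl fun k _ => show hA.eigenvalues k = if hA.eigenvalues k = 1 then 1 else 0 by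
    rcases h01 k with h | h <;> simp [h], sum_boole] at h
  exact_mod_cast h

lemma exists_eq_vecMulVec_star (h01 : ∀ k, hA.eigenvalues k = 0 ∨ hA.eigenvalues k = 1)
    (htr : A.trace = 1) : ∃ w : n → ℂ, A = vecMulVec w (star w) := by
  obtain ⟨k₀, hk₀⟩ := hA.exists_filter_eigenvalues_eq_one_eq_singleton h01 htr
  refine ⟨fun i => hA.eigenvectorBasis k₀ i, ?_⟩
  conv_lhs => rw [← hA.eigProj_one h01, eigProj, dif_pos hA, hk₀, sum_singleton]

end IsHermitian

end Matrix

section Mterm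

lemma nim_eq_mul_floor_or_mul_ceil {y : ℝ} (hy : y ≠ 0) (x : ℝ) :
    nim y x = y * ⌊x / y⌋ ∨ nim y x = y * ⌈x / y⌉ := by
  rw [nim, if_neg hy]
  split_ifs
  exacts [Or.inl rfl, Or.inr rfl]

lemma nim_one_eq_zero_or_one {c : ℝ} (h0 : 0 < c) (h1 : c < 1) : nim 1 c = 0 ∨ nim 1 c = 1 := by
  have hfloor : ⌊c⌋ = 0 := Int.floor_eq_zero_iff.mpr ⟨h0.le, h1⟩
  have hceil : ⌈c⌉ = 1 := Int.ceil_eq_iff.mpr ⟨by norm_num [h0], by norm_num [h1.le]⟩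
  simpa [hfloor, hceil] using nim_eq_mul_floor_or_mul_ceil one_ne_zero c

lemma Mterm_zero_right (η T : ℝ) : Mterm η T 0 = 0 := by
  simp [Mterm]

variable {c : ℝ}

lemma Mterm_one_one_nonneg (h0 : 0 ≤ c) (h1 : c ≤ 1) : 0 ≤ Mterm 1 1 c := by
  rw [Mterm, div_one, neg_nonneg]
  exact mul_nonpos_of_nonneg_of_nonpos (abs_nonneg _) (Real.logb_nonpos one_lt_two h0 h1)

lemma Mterm_one_one_pos (h0 : 0 < c) (h1 : c < 1) : 0 < Mterm 1 1 c := by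
  rw [Mterm, div_one, neg_pos]
  refine mul_neg_of_pos_of_neg (abs_pos.mpr (sub_ne_zero.mpr ?_)) (Real.logb_neg one_lt_two h0 h1)
  rcases nim_one_eq_zero_or_one h0 h1 with h | h <;> rw [h]
  exacts [h0.ne', h1.ne]

lemma Mterm_one_one_eq_zero_iff (h0 : 0 ≤ c) (h1 : c ≤ 1) : Mterm 1 1 c = 0 ↔ c = 0 ∨ c = 1 := by
  refine ⟨fun h => ?_, ?_⟩
  · by_contra! hc
    exact (Mterm_one_one_pos (h0.lt_of_ne' hc.1) (h1.lt_of_ne hc.2)).ne' h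
  · rintro (rfl | rfl) <;> simp [Mterm]

end Mterm

section Spectrum

variable {n : Type*} [Fintype n] [DecidableEq n] {H : Matrix n n ℂ}

lemma evalsR_of_isHermitian (hH : H.IsHermitian) : evalsR H = hH.eigenvalues :=
  dif_pos hH

lemma evalsR_zero : evalsR (0 : Matrix n n ℂ) = 0 := by
  rw [evalsR_of_isHermitian isHermitian_zero, IsHermitian.eigenvalues_eq_zero_iff]

lemma evalsR_mem_Icc (hH : H.PosSemidef) (htr : H.trace = 1) (k : n) :
    evalsR H k ∈ Set.Icc 0 1 := by
  rw [evalsR_of_isHermitian hH.isHermitian]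
  refine ⟨hH.eigenvalues_nonneg k, ?_⟩
  rw [← hH.isHermitian.sum_eigenvalues_eq_one htr]
  exact single_le_sum (fun j _ => hH.eigenvalues_nonneg j) (mem_univ k)

lemma sum_Mterm_evalsR_nonneg (hH : H.PosSemidef) (htr : H.trace = 1) :
    0 ≤ ∑ k, Mterm 1 1 (evalsR H k) :=
  sum_nonneg fun k _ => Mterm_one_one_nonneg (evalsR_mem_Icc hH htr k).1 (evalsR_mem_Icc hH htr k).2

lemma sum_Mterm_evalsR_eq_zero_iff (hH : H.PosSemidef) (htr : H.trace = 1) :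
    ∑ k, Mterm 1 1 (evalsR H k) = 0 ↔ ∀ k, evalsR H k = 0 ∨ evalsR H k = 1 := by
  rw [sum_eq_zero_iff_of_nonneg fun k _ =>
    Mterm_one_one_nonneg (evalsR_mem_Icc hH htr k).1 (evalsR_mem_Icc hH htr k).2]
  simp only [mem_univ, true_implies]
  exact forall_congr' fun k =>
    Mterm_one_one_eq_zero_iff (evalsR_mem_Icc hH htr k).1 (evalsR_mem_Icc hH htr k).2

end Spectrum

section RankOneProjection

variable {n : Type*} [Fintype n] [DecidableEq n] {ρ : Matrix n n ℂ}

lemma sum_image_evalsR_Mterm_trunc {γ : Type*} [Fintype γ] [DecidableEq γ]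
    (hρ : ρ.IsHermitian) (hid : IsIdempotentElem ρ) (htr : ρ.trace = 1)
    (F : Matrix n n ℂ → Matrix γ γ ℂ) (hF : F 0 = 0) :
    ∑ η ∈ image (evalsR ρ) univ, ∑ i, Mterm η (η * (dimEig ρ η : ℝ)) (evalsR (F (trunc ρ η)) i)
      = ∑ i, Mterm 1 1 (evalsR (F ρ) i) := by
  have h01 := hρ.eigenvalues_eq_zero_or_one hid
  obtain ⟨k₀, hk₀⟩ := hρ.exists_filter_eigenvalues_eq_one_eq_singleton h01 htr
  have hk₀_one : hρ.eigenvalues k₀ = 1 := by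
    simpa using (Finset.ext_iff.mp hk₀ k₀).mpr (mem_singleton_self k₀)
  have hdim : dimEig ρ 1 = 1 := by rw [dimEig, dif_pos hρ, hk₀, card_singleton]
  have htrunc : trunc ρ 1 = ρ := by rw [trunc, hρ.eigProj_one h01, Complex.ofReal_one, one_smul]
  have hone_mem : (1 : ℝ) ∈ image (evalsR ρ) univ :=
    mem_image.mpr ⟨k₀, mem_univ _, by rw [evalsR_of_isHermitian hρ, hk₀_one]⟩
  rw [sum_eq_single_of_mem 1 hone_mem fun η hη hne => ?_]
  · rw [hdim, htrunc, Nat.cast_one, mul_one]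
  obtain ⟨k, -, rfl⟩ := mem_image.mp hη
  have hk : evalsR ρ k = 0 := by
    rw [evalsR_of_isHermitian hρ] at hne ⊢
    exact (h01 k).resolve_right hne
  simp [hk, trunc, hF, evalsR_zero, Mterm_zero_right]

end RankOneProjection

lemma exists_eq_vecMulVec_iff_evalsR_mul_conjTranspose {m p : Type*} [Fintype m]
    [DecidableEq m] [Fintype p] {C : Matrix m p ℂ} (hC : (C * Cᴴ).trace = 1) :
    (∃ u v, C = vecMulVec u v) ↔ ∀ k, evalsR (C * Cᴴ) k = 0 ∨ evalsR (C * Cᴴ) k = 1 := by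
  have hH := isHermitian_mul_conjTranspose_self C
  rw [evalsR_of_isHermitian hH]
  constructor
  · rintro ⟨u, v, rfl⟩
    refine hH.eigenvalues_eq_zero_or_one ?_
    rw [conjTranspose_vecMulVec, vecMulVec_mul_vecMulVec] at hC ⊢
    exact isIdempotentElem_vecMulVec hC
  · intro h01
    obtain ⟨w, hw⟩ := hH.exists_eq_vecMulVec_star h01 hC
    have hid : IsIdempotentElem (C * Cᴴ) := hw ▸ isIdempotentElem_vecMulVec (hw ▸ hC)
    have hPH : (1 - C * Cᴴ) * (C * Cᴴ) = 0 := by rw [sub_mul, one_mul, hid.eq, sub_self]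
    have hPC : (1 - C * Cᴴ) * C = 0 := by
      refine self_mul_conjTranspose_eq_zero.mp ?_
      rw [conjTranspose_mul, ← Matrix.mul_assoc, Matrix.mul_assoc _ C, hPH, Matrix.zero_mul]
    rw [Matrix.sub_mul, Matrix.one_mul, sub_eq_zero, hw, vecMulVec_mul] at hPC
    exact ⟨w, star w ᵥ* C, hPC⟩


lemma sum_Mterm_evalsR_mul_conjTranspose_eq_zero_iff {m p : Type*} [Fintype m] [DecidableEq m]
    [Fintype p] {C : Matrix m p ℂ} (hC : (C * Cᴴ).trace = 1) :
    ∑ k, Mterm 1 1 (evalsR (C * Cᴴ) k) = 0 ↔ ∃ u v, C = vecMulVec u v := by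
  rw [sum_Mterm_evalsR_eq_zero_iff (posSemidef_self_mul_conjTranspose C) hC,
    exists_eq_vecMulVec_iff_evalsR_mul_conjTranspose hC]

section Bipartite

variable {α β : Type*}

/-- The eigenvalues of `coeffMatrix φ * (coeffMatrix φ)ᴴ` are the squared Schmidt coefficients
`c_k` of `φ`. -/
def coeffMatrix (φ : α × β → ℂ) : Matrix α β ℂ := of fun a b => φ (a, b)

lemma coeffMatrix_eq_vecMulVec_iff {φ : α × β → ℂ} {u : α → ℂ} {v : β → ℂ} :
    coeffMatrix φ = vecMulVec u v ↔ φ = fun p => u p.1 * v p.2 := by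
  simp [coeffMatrix, ← Matrix.ext_iff, funext_iff, vecMulVec_apply]

variable [Fintype α] [Fintype β]

lemma ptraceB_vecMulVec_star (φ : α × β → ℂ) :
    ptraceB (vecMulVec φ (star φ)) = coeffMatrix φ * (coeffMatrix φ)ᴴ := by
  ext a a'
  simp [ptraceB, coeffMatrix, mul_apply, vecMulVec_apply]

lemma ptraceA_vecMulVec_star (φ : α × β → ℂ) :
    ptraceA (vecMulVec φ (star φ)) = (coeffMatrix φ)ᵀ * (coeffMatrix φ)ᵀᴴ := by
  ext b b'
  simp [ptraceA, coeffMatrix, mul_apply, vecMulVec_apply]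

lemma trace_coeffMatrix_mul_conjTranspose (φ : α × β → ℂ) :
    (coeffMatrix φ * (coeffMatrix φ)ᴴ).trace = ∑ p, star (φ p) * φ p := by
  simp [trace, coeffMatrix, mul_apply, Fintype.sum_prod_type, mul_comm]

variable [DecidableEq α] [DecidableEq β]

lemma MmeasA_eq_sum_Mterm_ptraceB {ρ : Matrix (α × β) (α × β) ℂ} (hρ : ρ.IsHermitian)
    (hid : IsIdempotentElem ρ) (htr : ρ.trace = 1) :
    MmeasA ρ = ∑ i, Mterm 1 1 (evalsR (ptraceB ρ) i) :=
  sum_image_evalsR_Mterm_trunc hρ hid htr ptraceB (by ext; simp [ptraceB])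

lemma MmeasB_eq_sum_Mterm_ptraceA {ρ : Matrix (α × β) (α × β) ℂ} (hρ : ρ.IsHermitian)
    (hid : IsIdempotentElem ρ) (htr : ρ.trace = 1) :
    MmeasB ρ = ∑ i, Mterm 1 1 (evalsR (ptraceA ρ) i) :=
  sum_image_evalsR_Mterm_trunc hρ hid htr ptraceA (by ext; simp [ptraceA])

end Bipartite

/-- for a pure bipartite state, `M` vanishes iff the state vector is a
product state; in particular `M > 0` for every entangled pure state. -/
theorem Mmeas_pure_eq_zero_iff_product
    {α β : Type*} [Fintype α] [Fintype β] [DecidableEq α] [DecidableEq β]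
    (φ : α × β → ℂ) (hφ : ∑ p, star (φ p) * φ p = 1) :
    (Mmeas (vecMulVec φ (star φ)) = 0 ↔
      ∃ (u : α → ℂ) (v : β → ℂ), φ = fun p => u p.1 * v p.2) ∧
    ((¬ ∃ (u : α → ℂ) (v : β → ℂ), φ = fun p => u p.1 * v p.2) →
      0 < Mmeas (vecMulVec φ (star φ))) := by
  set C := coeffMatrix φ
  have hρ : (vecMulVec φ (star φ)).trace = 1 := by rw [trace_vecMulVec, dotProduct_comm]; exact hφ
  have hC : (C * Cᴴ).trace = 1 := (trace_coeffMatrix_mul_conjTranspose φ).trans hφ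
  have hCt : (Cᵀ * Cᵀᴴ).trace = 1 := (trace_transpose_mul_conjTranspose_transpose C).trans hC
  have hM : Mmeas (vecMulVec φ (star φ))
      = (∑ i, Mterm 1 1 (evalsR (C * Cᴴ) i) + ∑ i, Mterm 1 1 (evalsR (Cᵀ * Cᵀᴴ) i)) / 2 := by
    have hherm := (posSemidef_vecMulVec_self_star φ).isHermitian
    rw [Mmeas, MmeasA_eq_sum_Mterm_ptraceB hherm (isIdempotentElem_vecMulVec hρ) hρ,
      MmeasB_eq_sum_Mterm_ptraceA hherm (isIdempotentElem_vecMulVec hρ) hρ,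
      ptraceB_vecMulVec_star, ptraceA_vecMulVec_star]
  have hprod : (∃ u v, C = vecMulVec u v) ↔
      ∃ (u : α → ℂ) (v : β → ℂ), φ = fun p => u p.1 * v p.2 := by
    simp only [C, coeffMatrix_eq_vecMulVec_iff]
  have hA_zero := (sum_Mterm_evalsR_mul_conjTranspose_eq_zero_iff hC).trans hprod
  have hB_zero := (sum_Mterm_evalsR_mul_conjTranspose_eq_zero_iff hCt).trans
    (exists_transpose_eq_vecMulVec_iff.trans hprod)
  have hA_nonneg := sum_Mterm_evalsR_nonneg (posSemidef_self_mul_conjTranspose C) hC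
  have hB_nonneg := sum_Mterm_evalsR_nonneg (posSemidef_self_mul_conjTranspose Cᵀ) hCt
  have hzero : Mmeas (vecMulVec φ (star φ)) = 0 ↔
      ∃ (u : α → ℂ) (v : β → ℂ), φ = fun p => u p.1 * v p.2 := by
    rw [hM]
    refine ⟨fun h => hA_zero.mp (by linarith), fun h => ?_⟩
    rw [hA_zero.mpr h, hB_zero.mpr h, add_zero, zero_div]
  have hnonneg : 0 ≤ Mmeas (vecMulVec φ (star φ)) := by rw [hM]; linarith
  exact ⟨hzero, fun hent => hnonneg.lt_of_ne' (mt hzero.mp hent)⟩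

end
end

section
/- The measure M vanishes for the two-qubit state σ = (1/6)(|00⟩⟨00| + 2|01⟩⟨01| + 3|1+⟩⟨1+|) with |+⟩ = (|0⟩+|1⟩)/√2, even though σ has no product eigenbasis (since |0⟩⟨0| and |+⟩⟨+| are not simultaneously diagonalizable). Hence M does not have a perfect detection range for nonclassically correlated states. -/
open Matrix Kronecker Finset
open scoped ComplexOrder

attribute [local instance] Classical.propDecidable

noncomputable section

def ket00 : Fin 2 × Fin 2 → ℂ := fun p => if p = (0, 0) then 1 else 0
def ket01 : Fin 2 × Fin 2 → ℂ := fun p => if p = (0, 1) then 1 else 0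
def ket10 : Fin 2 × Fin 2 → ℂ := fun p => if p = (1, 0) then 1 else 0
/-- `|1+⟩ = |1⟩ ⊗ (|0⟩ + |1⟩)/√2` -/
def ket1p : Fin 2 × Fin 2 → ℂ := fun p => if p.1 = 1 then ((1 / Real.sqrt 2 : ℝ) : ℂ) else 0
/-- `|φ⟩ = (|00⟩ + |11⟩)/√2` -/
def ketBell : Fin 2 × Fin 2 → ℂ := fun p => if p.1 = p.2 then ((1 / Real.sqrt 2 : ℝ) : ℂ) else 0

/-- `σ = (1/6)(|00⟩⟨00| + 2|01⟩⟨01| + 3|1+⟩⟨1+|)` -/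
def sigmaState : Matrix (Fin 2 × Fin 2) (Fin 2 × Fin 2) ℂ :=
  ((1 / 6 : ℝ) : ℂ) • vecMulVec ket00 (star ket00)
  + ((1 / 3 : ℝ) : ℂ) • vecMulVec ket01 (star ket01)
  + ((1 / 2 : ℝ) : ℂ) • vecMulVec ket1p (star ket1p)

/-!
The nonzero eigenvalues 1/6, 1/3, 1/2 of σ are simple, with product eigenvectors |00⟩, |01⟩,
|1+⟩. Hence each truncation of σ is η times a product rank-one projector, its partial traces are
η times projectors, their eigenvalues are 0 or η, and every term of `M` vanishes.

If σ had a product eigenbasis {a_j ⊗ b_k}, every a_j ⊗ b_k would be an eigenvector of σ. Some a_j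
has a nonzero |0⟩-component, which forces b_0 ∝ |0⟩ or |1⟩; some a_j' has a nonzero
|1⟩-component, which forces b_0 ∝ |+⟩ or |−⟩. No unit vector does both.
-/

section KroneckerVec

variable {α β R : Type*}

def kroneckerVec [Mul R] (a : α → R) (b : β → R) : α × β → R := fun p => a p.1 * b p.2

variable [CommSemiring R]

lemma vecMulVec_kroneckerVec (a c : α → R) (b d : β → R) :
    vecMulVec (kroneckerVec a b) (kroneckerVec c d) = vecMulVec a c ⊗ₖ vecMulVec b d := by
  ext p q
  simp only [vecMulVec_apply, kroneckerVec, kroneckerMap_apply]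
  ring

lemma star_kroneckerVec [StarRing R] (a : α → R) (b : β → R) :
    star (kroneckerVec a b) = kroneckerVec (star a) (star b) := by
  ext p
  simp [kroneckerVec]

lemma kroneckerVec_dotProduct [Fintype α] [Fintype β] (a c : α → R) (b d : β → R) :
    kroneckerVec a b ⬝ᵥ kroneckerVec c d = (a ⬝ᵥ c) * (b ⬝ᵥ d) := by
  simp only [dotProduct, kroneckerVec, Fintype.sum_prod_type, Finset.sum_mul_sum]
  exact Finset.sum_congr rfl fun _ _ => Finset.sum_congr rfl fun _ _ => by ring

end KroneckerVec

section PartialTrace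

variable {α β : Type*} [Fintype α] [Fintype β]

lemma ptraceB_smul (c : ℂ) (ρ : Matrix (α × β) (α × β) ℂ) :
    ptraceB (c • ρ) = c • ptraceB ρ := by
  ext a a'
  simp [ptraceB, Finset.mul_sum]

lemma ptraceA_smul (c : ℂ) (ρ : Matrix (α × β) (α × β) ℂ) :
    ptraceA (c • ρ) = c • ptraceA ρ := by
  ext b b'
  simp [ptraceA, Finset.mul_sum]

lemma ptraceB_kronecker (P : Matrix α α ℂ) (Q : Matrix β β ℂ) :
    ptraceB (P ⊗ₖ Q) = Q.trace • P := by
  ext a a'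
  simp [ptraceB, trace, Finset.mul_sum, mul_comm]

lemma ptraceA_kronecker (P : Matrix α α ℂ) (Q : Matrix β β ℂ) :
    ptraceA (P ⊗ₖ Q) = P.trace • Q := by
  ext b b'
  simp [ptraceA, trace, Finset.sum_mul]

end PartialTrace

section Spectral

variable {n : Type*} [Fintype n]

lemma isIdempotentElem_vecMulVec_star {w : n → ℂ} (hw : star w ⬝ᵥ w = 1) :
    IsIdempotentElem (vecMulVec w (star w)) := by
  rw [IsIdempotentElem, vecMulVec_mul_vecMulVec, hw, one_smul]

lemma trace_vecMulVec_star {w : n → ℂ} (hw : star w ⬝ᵥ w = 1) :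
    (vecMulVec w (star w)).trace = 1 := by
  rw [trace_vecMulVec, dotProduct_comm, hw]

lemma vecMulVec_star_eq_of_mem_span {v w : n → ℂ} (hv : star v ⬝ᵥ v = 1)
    (hw : star w ⬝ᵥ w = 1) (hvw : v ∈ ℂ ∙ w) :
    vecMulVec v (star v) = vecMulVec w (star w) := by
  obtain ⟨z, rfl⟩ := Submodule.mem_span_singleton.mp hvw
  rw [star_smul, smul_dotProduct, dotProduct_smul, hw, smul_eq_mul, smul_eq_mul, mul_one] at hv
  rw [star_smul, smul_vecMulVec, vecMulVec_smul, smul_smul, mul_comm, hv, one_smul]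

lemma star_dotProduct_ne_zero_of_mem_span {v v' w : n → ℂ} (hw : star w ⬝ᵥ w = 1)
    (hv : star v ⬝ᵥ v = 1) (hv' : star v' ⬝ᵥ v' = 1) (hvw : v ∈ ℂ ∙ w) (hv'w : v' ∈ ℂ ∙ w) :
    star v ⬝ᵥ v' ≠ 0 := by
  obtain ⟨z, rfl⟩ := Submodule.mem_span_singleton.mp hvw
  obtain ⟨z', rfl⟩ := Submodule.mem_span_singleton.mp hv'w
  simp only [star_smul, smul_dotProduct, dotProduct_smul, hw, smul_eq_mul, mul_one] at hv hv' ⊢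
  have hz : z ≠ 0 := by rintro rfl; simp at hv
  have hz' : z' ≠ 0 := by rintro rfl; simp at hv'
  simp [hz, hz']

variable [DecidableEq n]

lemma evalsR_of_isHermitian_s13 {A : Matrix n n ℂ} (hA : A.IsHermitian) :
    evalsR A = hA.eigenvalues :=
  dif_pos hA

lemma evalsR_eq_zero_or_eq_of_mul_self_eq_smul {A : Matrix n n ℂ} {η : ℝ}
    (hA : A * A = (η : ℂ) • A) (i : n) : evalsR A i = 0 ∨ evalsR A i = η := by
  unfold evalsR
  split_ifs with hH
  · set v := ⇑(hH.eigenvectorBasis i)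
    have hv : v ≠ 0 := (WithLp.ofLp_eq_zero 2).ne.2 (hH.eigenvectorBasis.orthonormal.ne_zero i)
    have hAv : A *ᵥ v = (hH.eigenvalues i : ℂ) • v := by
      rw [hH.mulVec_eigenvectorBasis, RCLike.real_smul_eq_coe_smul (K := ℂ)]; rfl
    have : ((hH.eigenvalues i : ℂ) * (hH.eigenvalues i - η)) • v = 0 := by
      have h := congrArg (· *ᵥ v) hA
      simp only [← mulVec_mulVec, hAv, mulVec_smul, smul_mulVec] at h
      rw [mul_sub, sub_smul, mul_smul, h, ← mul_smul, mul_comm, mul_smul, sub_self]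
    rcases mul_eq_zero.mp ((smul_eq_zero.mp this).resolve_right hv) with h | h
    · exact Or.inl (by exact_mod_cast h)
    · exact Or.inr (by exact_mod_cast sub_eq_zero.mp h)
  · exact Or.inl rfl

lemma eigProj_eq_vecMulVec_of_eigenspace_le_span {ρ : Matrix n n ℂ} (hρ : ρ.IsHermitian)
    {η : ℝ} (hη : η ∈ Set.range hρ.eigenvalues) {w : n → ℂ} (hw : star w ⬝ᵥ w = 1)
    (hρw : Module.End.eigenspace (toLin' ρ) η ≤ ℂ ∙ w) :
    eigProj ρ η = vecMulVec w (star w) := by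
  set v : n → n → ℂ := fun k => ⇑(hρ.eigenvectorBasis k)
  have hv_dot (k k' : n) : star (v k) ⬝ᵥ v k' = if k = k' then 1 else 0 := by
    rw [dotProduct_comm, ← orthonormal_iff_ite.mp hρ.eigenvectorBasis.orthonormal k k']
    rfl
  have hv_mem (k : n) (hk : hρ.eigenvalues k = η) : v k ∈ ℂ ∙ w := by
    refine hρw (Module.End.mem_eigenspace_iff.mpr ?_)
    rw [toLin'_apply, hρ.mulVec_eigenvectorBasis, hk, RCLike.real_smul_eq_coe_smul (K := ℂ)]
    rfl
  have hv_unit (k : n) : star (v k) ⬝ᵥ v k = 1 := by rw [hv_dot, if_pos rfl]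
  obtain ⟨k₀, hk₀⟩ := hη
  -- two orthonormal vectors cannot lie on one line, so only `k₀` has eigenvalue `η`
  have hfilter : univ.filter (fun k => hρ.eigenvalues k = η) = {k₀} := by
    refine Finset.eq_singleton_iff_unique_mem.mpr ⟨by simp [hk₀], fun k hk => ?_⟩
    rw [Finset.mem_filter] at hk
    by_contra hne
    refine star_dotProduct_ne_zero_of_mem_span hw (hv_unit k) (hv_unit k₀) (hv_mem k hk.2)
      (hv_mem k₀ hk₀) ?_
    rw [hv_dot, if_neg hne]
  rw [eigProj, dif_pos hρ, hfilter, Finset.sum_singleton]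
  exact vecMulVec_star_eq_of_mem_span (hv_unit k₀) hw (hv_mem k₀ hk₀)

end Spectral

section Measure

lemma nim_self (y : ℝ) : nim y y = y := by
  rcases eq_or_ne y 0 with rfl | hy
  · simp [nim]
  · simp [nim, hy]

lemma nim_zero_right (y : ℝ) : nim y 0 = 0 := by
  simp [nim]

lemma Mterm_eq_zero_of_eq_zero_or_eq {η T lam : ℝ} (h : lam = 0 ∨ lam = η) :
    Mterm η T lam = 0 := by
  rcases h with rfl | rfl <;> simp [Mterm, nim_self, nim_zero_right]

variable {α β : Type*} [Fintype α] [Fintype β] [DecidableEq α] [DecidableEq β]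

lemma eigProj_eq_kronecker_of_eigenspace_le_span {ρ : Matrix (α × β) (α × β) ℂ}
    (hρ : ρ.IsHermitian) {η : ℝ} (hη : η ∈ Set.range hρ.eigenvalues) {a : α → ℂ} {b : β → ℂ}
    (ha : star a ⬝ᵥ a = 1) (hb : star b ⬝ᵥ b = 1)
    (hρab : Module.End.eigenspace (toLin' ρ) η ≤ ℂ ∙ kroneckerVec a b) :
    eigProj ρ η = vecMulVec a (star a) ⊗ₖ vecMulVec b (star b) := by
  have hab : star (kroneckerVec a b) ⬝ᵥ kroneckerVec a b = 1 := by
    rw [star_kroneckerVec, kroneckerVec_dotProduct, ha, hb, mul_one]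
  rw [eigProj_eq_vecMulVec_of_eigenspace_le_span hρ hη hab hρab, star_kroneckerVec,
    vecMulVec_kroneckerVec]

theorem Mmeas_eq_zero_of_eigenspace_le_span_kroneckerVec {ρ : Matrix (α × β) (α × β) ℂ}
    (hρ : ρ.IsHermitian)
    (hρ_prod : ∀ η : ℝ, η ≠ 0 → ∃ (a : α → ℂ) (b : β → ℂ), star a ⬝ᵥ a = 1 ∧
      star b ⬝ᵥ b = 1 ∧ Module.End.eigenspace (toLin' ρ) η ≤ ℂ ∙ kroneckerVec a b) :
    Mmeas ρ = 0 := by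
  have key (η : ℝ) (hη : η ∈ image (evalsR ρ) univ) :
      ptraceB (trunc ρ η) * ptraceB (trunc ρ η) = (η : ℂ) • ptraceB (trunc ρ η) ∧
      ptraceA (trunc ρ η) * ptraceA (trunc ρ η) = (η : ℂ) • ptraceA (trunc ρ η) := by
    rw [trunc, ptraceB_smul, ptraceA_smul, smul_mul_smul, smul_mul_smul, ← smul_smul,
      ← smul_smul]
    rcases eq_or_ne η 0 with rfl | hη0
    · simp
    obtain ⟨a, b, ha, hb, hρab⟩ := hρ_prod η hη0
    have hη' : η ∈ Set.range hρ.eigenvalues := by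
      simpa [evalsR_of_isHermitian_s13 hρ] using hη
    rw [eigProj_eq_kronecker_of_eigenspace_le_span hρ hη' ha hb hρab, ptraceB_kronecker,
      ptraceA_kronecker, trace_vecMulVec_star ha, trace_vecMulVec_star hb, one_smul, one_smul,
      (isIdempotentElem_vecMulVec_star ha).eq, (isIdempotentElem_vecMulVec_star hb).eq]
    exact ⟨rfl, rfl⟩
  have hA : MmeasA ρ = 0 := Finset.sum_eq_zero fun η hη => Finset.sum_eq_zero fun i _ =>
    Mterm_eq_zero_of_eq_zero_or_eq (evalsR_eq_zero_or_eq_of_mul_self_eq_smul (key η hη).1 i)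
  have hB : MmeasB ρ = 0 := Finset.sum_eq_zero fun η hη => Finset.sum_eq_zero fun i _ =>
    Mterm_eq_zero_of_eq_zero_or_eq (evalsR_eq_zero_or_eq_of_mul_self_eq_smul (key η hη).2 i)
  rw [Mmeas, hA, hB, add_zero, zero_div]

end Measure

section ProductEigenbasis

variable {α β : Type*} [Fintype α] [Fintype β] [DecidableEq α] [DecidableEq β]

lemma exists_apply_ne_zero_of_orthonormal {a : α → α → ℂ}
    (ha : ∀ j j', ∑ i, star (a j i) * a j' i = if j = j' then 1 else 0) (i : α) :
    ∃ j, a j i ≠ 0 := by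
  let M : Matrix α α ℂ := Matrix.of fun i j => a j i
  have hM : Mᴴ * M = 1 := by
    ext j j'
    simpa [M, mul_apply, one_apply] using ha j j'
  have hMM : M * Mᴴ = 1 := mul_eq_one_comm.mp hM
  have hii := congrFun (congrFun hMM i) i
  by_contra! h
  simp [M, mul_apply, h] at hii

lemma mulVec_kroneckerVec_of_eq_sum {ρ : Matrix (α × β) (α × β) ℂ} {a : α → α → ℂ}
    {b : β → β → ℂ} {e : α → β → ℝ}
    (ha : ∀ j j', ∑ i, star (a j i) * a j' i = if j = j' then 1 else 0)
    (hb : ∀ k k', ∑ i, star (b k i) * b k' i = if k = k' then 1 else 0)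
    (hρ : ρ = ∑ j : α, ∑ k : β,
      (e j k : ℂ) • (vecMulVec (a j) (star (a j)) ⊗ₖ vecMulVec (b k) (star (b k))))
    (j : α) (k : β) :
    ρ *ᵥ kroneckerVec (a j) (b k) = (e j k : ℂ) • kroneckerVec (a j) (b k) := by
  simp_rw [hρ, Matrix.sum_mulVec, smul_mulVec, ← vecMulVec_kroneckerVec, ← star_kroneckerVec,
    vecMulVec_mulVec, op_smul_eq_smul, star_kroneckerVec, kroneckerVec_dotProduct]
  simp only [dotProduct, Pi.star_apply, ha, hb]
  simp

end ProductEigenbasis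

lemma sigmaState_isHermitian : sigmaState.IsHermitian := by
  have h (c : ℝ) (hc : 0 ≤ c) (v : Fin 2 × Fin 2 → ℂ) :
      ((c : ℂ) • vecMulVec v (star v)).PosSemidef :=
    (posSemidef_vecMulVec_self_star v).smul (Complex.zero_le_real.mpr hc)
  exact (((h _ (by norm_num) ket00).add (h _ (by norm_num) ket01)).add
    (h _ (by norm_num) ket1p)).isHermitian

lemma sigmaState_apply (p q : Fin 2 × Fin 2) :
    sigmaState p q =
      if p = (0, 0) ∧ q = (0, 0) then 1 / 6
      else if p = (0, 1) ∧ q = (0, 1) then 1 / 3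
      else if p.1 = 1 ∧ q.1 = 1 then 1 / 4 else 0 := by
  have hsqrt : ((Real.sqrt 2 : ℂ))⁻¹ * ((Real.sqrt 2 : ℂ))⁻¹ = 1 / 2 := by
    rw [← mul_inv, ← Complex.ofReal_mul, Real.mul_self_sqrt zero_le_two]
    norm_num
  obtain ⟨p₁, p₂⟩ := p
  obtain ⟨q₁, q₂⟩ := q
  fin_cases p₁ <;> fin_cases p₂ <;> fin_cases q₁ <;> fin_cases q₂ <;>
    simp [sigmaState, vecMulVec_apply, ket00, ket01, ket1p, Prod.ext_iff] <;>
    norm_num [hsqrt]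


lemma eigen_equations_of_sigmaState_mulVec_eq_smul {u : Fin 2 × Fin 2 → ℂ} {c : ℂ}
    (h : sigmaState *ᵥ u = c • u) :
    u (0, 0) / 6 = c * u (0, 0) ∧ u (0, 1) / 3 = c * u (0, 1) ∧
      (u (1, 0) + u (1, 1)) / 4 = c * u (1, 0) ∧ (u (1, 0) + u (1, 1)) / 4 = c * u (1, 1) := by
  have hp (p : Fin 2 × Fin 2) := congrFun h p
  simp only [mulVec, dotProduct, Fintype.sum_prod_type, Fin.sum_univ_two, sigmaState_apply,
    Pi.smul_apply, smul_eq_mul, Prod.mk.injEq] at hp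
  refine ⟨?_, ?_, ?_, ?_⟩
  · simpa [div_eq_inv_mul] using hp (0, 0)
  · simpa [div_eq_inv_mul] using hp (0, 1)
  · have := hp (1, 0); norm_num at this; linear_combination this
  · have := hp (1, 1); norm_num at this; linear_combination this

lemma sigmaState_eigenspace_sixth_le :
    Module.End.eigenspace (toLin' sigmaState) (1 / 6) ≤
      ℂ ∙ kroneckerVec (Pi.single 0 1) (Pi.single 0 1) := by
  intro v hv
  obtain ⟨-, e₁, e₂, e₃⟩ :=
    eigen_equations_of_sigmaState_mulVec_eq_smul (Module.End.mem_eigenspace_iff.mp hv)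
  refine Submodule.mem_span_singleton.mpr ⟨v (0, 0), ?_⟩
  ext ⟨i, j⟩
  fin_cases i <;> fin_cases j <;> simp [kroneckerVec]
  · linear_combination -6 * e₁
  · linear_combination 3 / 2 * e₂ - 9 / 2 * e₃
  · linear_combination -(9 / 2) * e₂ + 3 / 2 * e₃

lemma sigmaState_eigenspace_third_le :
    Module.End.eigenspace (toLin' sigmaState) (1 / 3) ≤
      ℂ ∙ kroneckerVec (Pi.single 0 1) (Pi.single 1 1) := by
  intro v hv
  obtain ⟨e₀, -, e₂, e₃⟩ :=
    eigen_equations_of_sigmaState_mulVec_eq_smul (Module.End.mem_eigenspace_iff.mp hv)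
  refine Submodule.mem_span_singleton.mpr ⟨v (0, 1), ?_⟩
  ext ⟨i, j⟩
  fin_cases i <;> fin_cases j <;> simp [kroneckerVec]
  · linear_combination 6 * e₀
  · linear_combination -(3 / 2) * e₂ - 9 / 2 * e₃
  · linear_combination -(9 / 2) * e₂ - 3 / 2 * e₃

lemma sigmaState_eigenspace_half_le :
    Module.End.eigenspace (toLin' sigmaState) (1 / 2) ≤
      ℂ ∙ kroneckerVec (Pi.single 1 1) (fun _ => (Real.sqrt 2 : ℂ)⁻¹) := by
  intro v hv
  obtain ⟨e₀, e₁, e₂, e₃⟩ :=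
    eigen_equations_of_sigmaState_mulVec_eq_smul (Module.End.mem_eigenspace_iff.mp hv)
  refine Submodule.mem_span_singleton.mpr ⟨v (1, 0) * Real.sqrt 2, ?_⟩
  ext ⟨i, j⟩
  fin_cases i <;> fin_cases j <;> simp [kroneckerVec]
  · linear_combination 3 * e₀
  · linear_combination 6 * e₁
  · linear_combination 2 * e₃ - 2 * e₂

lemma sigmaState_eigenspace_eq_bot {c : ℂ} (hc : c ≠ 0) (h₆ : c ≠ 1 / 6) (h₃ : c ≠ 1 / 3)
    (h₂ : c ≠ 1 / 2) : Module.End.eigenspace (toLin' sigmaState) c = ⊥ := by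
  refine (Submodule.eq_bot_iff _).mpr fun v hv => ?_
  obtain ⟨e₀, e₁, e₂, e₃⟩ :=
    eigen_equations_of_sigmaState_mulVec_eq_smul (Module.End.mem_eigenspace_iff.mp hv)
  have h₀₀ : v (0, 0) = 0 := by
    have : (1 / 6 - c) * v (0, 0) = 0 := by linear_combination e₀
    exact (mul_eq_zero.mp this).resolve_left (sub_ne_zero.mpr h₆.symm)
  have h₀₁ : v (0, 1) = 0 := by
    have : (1 / 3 - c) * v (0, 1) = 0 := by linear_combination e₁
    exact (mul_eq_zero.mp this).resolve_left (sub_ne_zero.mpr h₃.symm)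
  have h₁₁ : v (1, 1) = v (1, 0) := by
    have : c * (v (1, 0) - v (1, 1)) = 0 := by linear_combination e₃ - e₂
    exact (sub_eq_zero.mp ((mul_eq_zero.mp this).resolve_left hc)).symm
  have h₁₀ : v (1, 0) = 0 := by
    have : (1 / 2 - c) * v (1, 0) = 0 := by linear_combination e₂ - 1 / 4 * h₁₁
    exact (mul_eq_zero.mp this).resolve_left (sub_ne_zero.mpr h₂.symm)
  ext ⟨i, j⟩
  fin_cases i <;> fin_cases j <;> simp [h₀₀, h₀₁, h₁₀, h₁₁]

lemma sigmaState_eigenspace_le_span {c : ℂ} (hc : c ≠ 0) :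
    ∃ (a b : Fin 2 → ℂ), star a ⬝ᵥ a = 1 ∧ star b ⬝ᵥ b = 1 ∧
      Module.End.eigenspace (toLin' sigmaState) c ≤ ℂ ∙ kroneckerVec a b := by
  by_cases h₆ : c = 1 / 6
  · exact ⟨_, _, by simp, by simp, h₆ ▸ sigmaState_eigenspace_sixth_le⟩
  by_cases h₃ : c = 1 / 3
  · exact ⟨_, _, by simp, by simp, h₃ ▸ sigmaState_eigenspace_third_le⟩
  by_cases h₂ : c = 1 / 2
  · refine ⟨_, _, by simp, ?_, h₂ ▸ sigmaState_eigenspace_half_le⟩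
    simp [dotProduct, ← mul_inv, ← Complex.ofReal_mul]
  refine ⟨Pi.single 0 1, Pi.single 0 1, by simp, by simp, ?_⟩
  simp [sigmaState_eigenspace_eq_bot hc h₆ h₃ h₂]

lemma kroneckerVec_constraints_of_sigmaState_mulVec_eq_smul {x y : Fin 2 → ℂ} {c : ℂ}
    (h : sigmaState *ᵥ kroneckerVec x y = c • kroneckerVec x y) :
    (x 0 ≠ 0 → y 0 * y 1 = 0) ∧ (x 1 ≠ 0 → y 0 ^ 2 = y 1 ^ 2) := by
  obtain ⟨e₀, e₁, e₂, e₃⟩ := eigen_equations_of_sigmaState_mulVec_eq_smul h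
  simp only [kroneckerVec] at e₀ e₁ e₂ e₃
  refine ⟨fun hx => ?_, fun hx => ?_⟩
  · refine (mul_eq_zero.mp ?_).resolve_left hx
    linear_combination 6 * y 0 * e₁ - 6 * y 1 * e₀
  · refine sub_eq_zero.mp ((mul_eq_zero.mp ?_).resolve_left hx)
    linear_combination 4 * y 0 * e₃ - 4 * y 1 * e₂

theorem not_hasProductEigenbasis_sigmaState : ¬ HasProductEigenbasis sigmaState := by
  rintro ⟨a, b, e, ha, hb, hσ⟩
  obtain ⟨j₀, hj₀⟩ := exists_apply_ne_zero_of_orthonormal ha 0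
  obtain ⟨j₁, hj₁⟩ := exists_apply_ne_zero_of_orthonormal ha 1
  have h₀ := (kroneckerVec_constraints_of_sigmaState_mulVec_eq_smul
    (mulVec_kroneckerVec_of_eq_sum ha hb hσ j₀ 0)).1 hj₀
  have h₁ := (kroneckerVec_constraints_of_sigmaState_mulVec_eq_smul
    (mulVec_kroneckerVec_of_eq_sum ha hb hσ j₁ 0)).2 hj₁
  have hb₀ : b 0 0 = 0 := pow_eq_zero_iff four_ne_zero |>.mp <| by
    linear_combination b 0 0 ^ 2 * h₁ + b 0 0 * b 0 1 * h₀
  have hb₁ : b 0 1 = 0 := pow_eq_zero_iff four_ne_zero |>.mp <| by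
    linear_combination -(b 0 1 ^ 2) * h₁ + b 0 0 * b 0 1 * h₀
  simpa [Fin.sum_univ_two, hb₀, hb₁] using hb 0 0

/-- `M` vanishes for the two-qubit state σ even though σ has no product
eigenbasis, so `M` does not have a perfect detection range. -/
theorem Mmeas_sigma_eq_zero_but_no_productEigenbasis :
    Mmeas sigmaState = 0 ∧ ¬ HasProductEigenbasis sigmaState :=
  ⟨Mmeas_eq_zero_of_eigenspace_le_span_kroneckerVec sigmaState_isHermitian
      fun _ hη => sigmaState_eigenspace_le_span (Complex.ofReal_ne_zero.mpr hη),
    not_hasProductEigenbasis_sigmaState⟩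

end
end
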